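/- arXiv:1311.6683 — 6 statements merged into one kernel-verified Lean document; each statement's English description precedes it below -/
import Mathlib

section
/- Define h_A(θ) = E[Xθ^X 1_{A^c}(X)]E[θ^X 1_A(X)] + θE[Xθ^X 1_A(X)] − E[θ^X 1_{A^c}(X)]E[Xθ^X 1_A(X)] − θE[X]E[θ^X 1_A(X)]. Then h_A(1) = 0 and h_A'(1) = p(A)·E[X(X−1)] + (1−E[X])·E[X 1_A(X)]. In particular, if E[X] ≤ 1 and p satisfies p(0)>0, p(0)+p(1)<1, then h_A'(1) > 0. -/
/-!
With `G_B(θ) = E[θ^X 1_B(X)]` and `M_B(θ) = E[X θ^X 1_B(X)]`, `h_A` is a polynomial in four power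
series of radius `> 1`, so it can be differentiated termwise at `θ = 1`, where `G_B' = M_B` and
`M_B' = E[X² 1_B(X)]`. Both identities then reduce to `E[f(X) 1_A] + E[f(X) 1_{Aᶜ}] = E[f(X)]` for
`f = 1, X, X²`. The derivative is positive because `p(0) + p(1) < 1` puts mass on `{X ≥ 2}`, where
`X(X-1) > 0`.
-/

open scoped Classical

/-- The function `h_A(θ)` of the paper. -/
noncomputable def hA (p : ℕ → ℝ) (A : Set ℕ) (θ : ℝ) : ℝ :=
  (∑' k : ℕ, (Aᶜ).indicator (fun k => (k : ℝ) * θ ^ k * p k) k)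
      * (∑' k : ℕ, A.indicator (fun k => θ ^ k * p k) k)
    + θ * (∑' k : ℕ, A.indicator (fun k => (k : ℝ) * θ ^ k * p k) k)
    - (∑' k : ℕ, (Aᶜ).indicator (fun k => θ ^ k * p k) k)
      * (∑' k : ℕ, A.indicator (fun k => (k : ℝ) * θ ^ k * p k) k)
    - θ * (∑' k : ℕ, (k : ℝ) * p k) * (∑' k : ℕ, A.indicator (fun k => θ ^ k * p k) k)

lemma tsum_indicator_add_tsum_indicator_compl {ι E : Type*} [NormedAddCommGroup E]
    [CompleteSpace E] {f : ι → E} (hf : Summable f) (B : Set ι) :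
    ∑' i, B.indicator f i + ∑' i, Bᶜ.indicator f i = ∑' i, f i := by
  rw [← (hf.indicator B).tsum_add (hf.indicator Bᶜ)]
  exact tsum_congr (B.indicator_self_add_compl_apply f)

lemma summable_natCast_pow_mul_abs_mul_pow {c : ℕ → ℝ} {r s : ℝ} (hs : 0 ≤ s) (hsr : s < r)
    (hc : Summable fun k => |c k| * r ^ k) (j : ℕ) :
    Summable fun k : ℕ => (k : ℝ) ^ j * |c k| * s ^ k := by
  have hr : 0 < r := hs.trans_lt hsr
  have hbound : ∀ k, |c k| * r ^ k ≤ ∑' k, |c k| * r ^ k :=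
    fun k => hc.le_tsum k fun _ _ => by positivity
  have hgeom : Summable fun k : ℕ => (k : ℝ) ^ j * (s / r) ^ k := by
    refine summable_pow_mul_geometric_of_norm_lt_one j ?_
    rwa [Real.norm_eq_abs, abs_of_nonneg (by positivity), div_lt_one hr]
  refine .of_nonneg_of_le (fun k => by positivity) (fun k => ?_)
    (hgeom.mul_left (∑' k, |c k| * r ^ k))
  calc (k : ℝ) ^ j * |c k| * s ^ k = (k : ℝ) ^ j * (s / r) ^ k * (|c k| * r ^ k) := by
        rw [div_pow]; field_simp
    _ ≤ (k : ℝ) ^ j * (s / r) ^ k * ∑' k, |c k| * r ^ k := by gcongr; exact hbound k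
    _ = _ := mul_comm _ _

lemma hasDerivAt_tsum_mul_pow {c : ℕ → ℝ} {r x : ℝ} (hc : Summable fun k => |c k| * r ^ k)
    (hx : |x| < r) :
    HasDerivAt (fun θ => ∑' k, c k * θ ^ k) (∑' k, c k * (k * x ^ (k - 1))) x := by
  obtain ⟨s, hxs, hsr⟩ := exists_between hx
  have hs : 0 < s := (abs_nonneg x).trans_lt hxs
  have hu := (summable_natCast_pow_mul_abs_mul_pow hs.le hsr hc 1).mul_left s⁻¹
  refine hasDerivAt_tsum_of_isPreconnected hu isOpen_Ioo isPreconnected_Ioo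
    (fun k θ _ => (hasDerivAt_pow k θ).const_mul (c k)) (fun k θ hθ => ?_)
    (y₀ := 0) (by simp [hs]) ?_ (abs_lt.mp hxs)
  · have hθ : |θ| ≤ s := abs_le.mpr ⟨hθ.1.le, hθ.2.le⟩
    have hpow : (k : ℝ) * s ^ (k - 1) = s⁻¹ * (k * s ^ k) := by
      cases k with
      | zero => simp
      | succ k => field_simp; simp [pow_succ]
    calc ‖c k * (k * θ ^ (k - 1))‖ = |c k| * (k * |θ| ^ (k - 1)) := by simp
      _ ≤ |c k| * (k * s ^ (k - 1)) := by gcongr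
      _ = s⁻¹ * ((k : ℝ) ^ 1 * |c k| * s ^ k) := by rw [hpow]; ring
  · refine summable_of_ne_finset_zero (s := {0}) fun k hk => ?_
    simp [zero_pow (Finset.notMem_singleton.mp hk)]

lemma hasDerivAt_tsum_indicator_mul_pow_one {g : ℕ → ℝ} {r : ℝ} (hr : 1 < r)
    (hg : Summable fun k => |g k| * r ^ k) (B : Set ℕ) :
    HasDerivAt (fun θ => ∑' k, B.indicator g k * θ ^ k)
      (∑' k, B.indicator (fun k => (k : ℝ) * g k) k) 1 := by
  have hB : Summable fun k => |B.indicator g k| * r ^ k := by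
    refine (hg.indicator B).congr fun k => ?_
    by_cases hk : k ∈ B <;> simp [hk]
  refine (hasDerivAt_tsum_mul_pow hB (by simpa using hr)).congr_deriv (tsum_congr fun k => ?_)
  rw [one_pow, mul_one, Set.indicator_mul_right, mul_comm]

lemma summable_natCast_pow_mul {p : ℕ → ℝ} (hp : ∀ k, 0 ≤ p k) {r : ℝ} (hr : 1 < r)
    (hpr : Summable fun k => p k * r ^ k) (j : ℕ) :
    Summable fun k : ℕ => (k : ℝ) ^ j * p k := by
  have hpr' : Summable fun k => |p k| * r ^ k := by simpa [abs_of_nonneg (hp _)] using hpr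
  simpa [abs_of_nonneg (hp _)] using summable_natCast_pow_mul_abs_mul_pow zero_le_one hr hpr' j

lemma hA_eq_tsum_mul_pow (p : ℕ → ℝ) (A : Set ℕ) :
    hA p A = fun θ =>
      (∑' k, Aᶜ.indicator (fun k => (k : ℝ) * p k) k * θ ^ k) * (∑' k, A.indicator p k * θ ^ k)
        + θ * (∑' k, A.indicator (fun k => (k : ℝ) * p k) k * θ ^ k)
        - (∑' k, Aᶜ.indicator p k * θ ^ k)
          * (∑' k, A.indicator (fun k => (k : ℝ) * p k) k * θ ^ k)
        - θ * (∑' k : ℕ, (k : ℝ) * p k) * (∑' k, A.indicator p k * θ ^ k) := by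
  funext θ
  have hG : ∀ (B : Set ℕ) k, B.indicator (fun k => θ ^ k * p k) k = B.indicator p k * θ ^ k :=
    fun B k => by rw [Set.indicator_mul_right, mul_comm]
  have hM : ∀ (B : Set ℕ) k, B.indicator (fun k => (k : ℝ) * θ ^ k * p k) k
      = B.indicator (fun k => (k : ℝ) * p k) k * θ ^ k := fun B k => by
    by_cases hk : k ∈ B <;> simp [hk, mul_right_comm]
  simp only [hA, hG, hM]

lemma hA_one_eq_zero {p : ℕ → ℝ} (hsum : Summable p) (hksum : Summable fun k : ℕ => (k : ℝ) * p k)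
    (hpsum : ∑' k, p k = 1) (A : Set ℕ) :
    hA p A 1 = 0 := by
  have ha := (tsum_indicator_add_tsum_indicator_compl hsum A).trans hpsum
  have hb := tsum_indicator_add_tsum_indicator_compl hksum A
  simp only [hA_eq_tsum_mul_pow, one_pow, mul_one, one_mul]
  linear_combination (∑' k, A.indicator p k) * hb
    - (∑' k, A.indicator (fun k => (k : ℝ) * p k) k) * ha

lemma hasDerivAt_hA_one {p : ℕ → ℝ} (hp : ∀ k, 0 ≤ p k) {r : ℝ} (hr : 1 < r)
    (hpr : Summable fun k => p k * r ^ k) (hpsum : ∑' k, p k = 1) (A : Set ℕ) :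
    HasDerivAt (hA p A)
      ((∑' k : ℕ, A.indicator p k) * (∑' k : ℕ, (k : ℝ) * ((k : ℝ) - 1) * p k)
        + (1 - ∑' k : ℕ, (k : ℝ) * p k) * (∑' k : ℕ, A.indicator (fun k => (k : ℝ) * p k) k)) 1 := by
  obtain ⟨s, hs, hsr⟩ := exists_between hr
  have hp₀ : Summable fun k => |p k| * r ^ k := by simpa [abs_of_nonneg (hp _)] using hpr
  have hp₁ : Summable fun k : ℕ => |(k : ℝ) * p k| * s ^ k := by
    simpa [abs_mul, abs_of_nonneg (hp _)] using
      summable_natCast_pow_mul_abs_mul_pow (by linarith) hsr hp₀ 1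
  have dG := hasDerivAt_tsum_indicator_mul_pow_one hr hp₀
  have dM := hasDerivAt_tsum_indicator_mul_pow_one hs hp₁
  have hid := hasDerivAt_id (1 : ℝ)
  have D := (((dM Aᶜ).mul (dG A)).add (hid.mul (dM A))).sub ((dG Aᶜ).mul (dM A)) |>.sub
    ((hid.mul_const (∑' k : ℕ, (k : ℝ) * p k)).mul (dG A))
  rw [hA_eq_tsum_mul_pow]
  refine D.congr_deriv ?_
  have hsum := summable_natCast_pow_mul hp hr hpr
  have ha := (tsum_indicator_add_tsum_indicator_compl (by simpa using hsum 0) A).trans hpsum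
  have hk₁ : Summable fun k : ℕ => (k : ℝ) * p k := by simpa using hsum 1
  have hk₂ : Summable fun k : ℕ => (k : ℝ) * ((k : ℝ) * p k) := (hsum 2).congr fun k => by ring
  have hq := tsum_indicator_add_tsum_indicator_compl hk₂ A
  have hfact : ∑' k : ℕ, (k : ℝ) * ((k : ℝ) - 1) * p k
      = ∑' k : ℕ, (k : ℝ) * ((k : ℝ) * p k) - ∑' k : ℕ, (k : ℝ) * p k := by
    rw [← hk₂.tsum_sub hk₁]
    exact tsum_congr fun k => by ring
  simp only [one_pow, mul_one, one_mul, id]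
  linear_combination (∑' k, A.indicator p k) * (hq - hfact)
    - (∑' k, A.indicator (fun k => (k : ℝ) * ((k : ℝ) * p k)) k) * ha

lemma exists_two_le_pos_of_tsum_eq_one {p : ℕ → ℝ} (hp : ∀ k, 0 ≤ p k)
    (hpsum : ∑' k, p k = 1) (hp01 : p 0 + p 1 < 1) : ∃ k, 2 ≤ k ∧ 0 < p k := by
  by_contra! h
  have hsupp : ∀ k ∉ Finset.range 2, p k = 0 := fun k hk =>
    le_antisymm (h k (by simp at hk; omega)) (hp k)
  rw [tsum_eq_sum hsupp] at hpsum
  simp only [Finset.sum_range_succ, Finset.range_one, Finset.sum_singleton] at hpsum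
  linarith

lemma tsum_natCast_mul_natCast_sub_one_mul_pos {p : ℕ → ℝ} (hp : ∀ k, 0 ≤ p k)
    (hsum : Summable fun k : ℕ => (k : ℝ) * ((k : ℝ) - 1) * p k) (hpsum : ∑' k, p k = 1)
    (hp01 : p 0 + p 1 < 1) :
    0 < ∑' k : ℕ, (k : ℝ) * ((k : ℝ) - 1) * p k := by
  obtain ⟨k, hk, hpk⟩ := exists_two_le_pos_of_tsum_eq_one hp hpsum hp01
  have hk' : (2 : ℝ) ≤ k := by exact_mod_cast hk
  refine hsum.tsum_pos (fun j => ?_) k (mul_pos (mul_pos (by linarith) (by linarith)) hpk)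
  rcases j with _ | j
  · simp
  · have : (0 : ℝ) ≤ j := j.cast_nonneg
    push_cast
    exact mul_nonneg (by nlinarith) (hp _)

theorem stmt3_general (p : ℕ → ℝ) (A : Set ℕ)
    (hp : ∀ k, 0 ≤ p k) (hpsum : ∑' k, p k = 1)
    (hp01 : p 0 + p 1 < 1)
    (hApos : 0 < ∑' k : ℕ, A.indicator p k)
    -- the generating function of `p` has radius of convergence `> 1`
    (hrad : ∃ r : ℝ, 1 < r ∧ Summable (fun k : ℕ => p k * r ^ k)) :
    hA p A 1 = 0
    ∧ HasDerivAt (hA p A)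
        ((∑' k : ℕ, A.indicator p k) * (∑' k : ℕ, (k : ℝ) * ((k : ℝ) - 1) * p k)
          + (1 - ∑' k : ℕ, (k : ℝ) * p k) * (∑' k : ℕ, A.indicator (fun k => (k : ℝ) * p k) k)) 1
    ∧ ((∑' k : ℕ, (k : ℝ) * p k) ≤ 1 →
        0 < (∑' k : ℕ, A.indicator p k) * (∑' k : ℕ, (k : ℝ) * ((k : ℝ) - 1) * p k)
          + (1 - ∑' k : ℕ, (k : ℝ) * p k) * (∑' k : ℕ, A.indicator (fun k => (k : ℝ) * p k) k)) := by
  obtain ⟨r, hr, hpr⟩ := hrad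
  have hsum := summable_natCast_pow_mul hp hr hpr
  refine ⟨hA_one_eq_zero (by simpa using hsum 0) (by simpa using hsum 1) hpsum A,
    hasDerivAt_hA_one hp hr hpr hpsum A, fun hm => ?_⟩
  have hfact : 0 < ∑' k : ℕ, (k : ℝ) * ((k : ℝ) - 1) * p k :=
    tsum_natCast_mul_natCast_sub_one_mul_pos hp
      (((hsum 2).sub (hsum 1)).congr fun k => by ring) hpsum hp01
  have hb : 0 ≤ ∑' k, A.indicator (fun k => (k : ℝ) * p k) k :=
    tsum_nonneg fun k => Set.indicator_nonneg (fun k _ => mul_nonneg k.cast_nonneg (hp k)) k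
  exact add_pos_of_pos_of_nonneg (mul_pos hApos hfact) (mul_nonneg (by linarith) hb)

theorem stmt3 (p : ℕ → ℝ) (A : Set ℕ)
    (hp : ∀ k, 0 ≤ p k) (hpsum : ∑' k, p k = 1)
    (hp0 : 0 < p 0) (hp01 : p 0 + p 1 < 1)
    (hApos : 0 < ∑' k : ℕ, A.indicator p k)
    -- the generating function of `p` has radius of convergence `> 1`
    (hrad : ∃ r : ℝ, 1 < r ∧ Summable (fun k : ℕ => p k * r ^ k)) :
    hA p A 1 = 0
    ∧ HasDerivAt (hA p A)
        ((∑' k : ℕ, A.indicator p k) * (∑' k : ℕ, (k : ℝ) * ((k : ℝ) - 1) * p k)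
          + (1 - ∑' k : ℕ, (k : ℝ) * p k) * (∑' k : ℕ, A.indicator (fun k => (k : ℝ) * p k) k)) 1
    ∧ ((∑' k : ℕ, (k : ℝ) * p k) ≤ 1 →
        0 < (∑' k : ℕ, A.indicator p k) * (∑' k : ℕ, (k : ℝ) * ((k : ℝ) - 1) * p k)
          + (1 - ∑' k : ℕ, (k : ℝ) * p k) * (∑' k : ℕ, A.indicator (fun k => (k : ℝ) * p k) k)) :=
  stmt3_general p A hp hpsum hp01 hApos hrad
end

section
/- Let p be a subcritical offspring distribution (μ(p)<1) satisfying p(0)>0 and p(0)+p(1)<1, and let A ⊆ ℕ with p(A)>0. If 0 ∉ A and q = min I_A, then c_A(q)=0, E[q^X 1_{X∈A^c}] = q, and lim_{θ↓q} μ(p_{A,θ}) = E[X q^{X−1} 1_{X∈A^c}] < 1. -/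
open scoped Classical

/-- The normalizing constant `c_A(θ)`. -/
noncomputable def cA (p : ℕ → ℝ) (A : Set ℕ) (θ : ℝ) : ℝ :=
  (θ - ∑' k : ℕ, (Aᶜ).indicator (fun k => θ ^ k * p k) k) /
    (θ * ∑' k : ℕ, A.indicator (fun k => θ ^ k * p k) k)

/-- The modified offspring distribution `p_{A,θ}`. -/
noncomputable def pMod (p : ℕ → ℝ) (A : Set ℕ) (θ : ℝ) : ℕ → ℝ :=
  fun k => if k ∈ A then cA p A θ * θ ^ k * p k else θ ^ ((k : ℤ) - 1) * p k

/-- `I_A`: the set of `θ > 0` for which `p_{A,θ}` is a probability distribution. -/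
def IA (p : ℕ → ℝ) (A : Set ℕ) : Set ℝ :=
  {θ | 0 < θ ∧ (∀ k, 0 ≤ pMod p A θ k) ∧ ∑' k, pMod p A θ k = 1}

/-!
For `0 < θ ≤ 1` the weights `pMod p A θ` always sum to one, so `θ ∈ IA p A` exactly when
`cA p A θ ≥ 0`, i.e. when `E[θ^X 1_{X ∉ A}] ≤ θ`. The map `θ ↦ E[θ^X 1_{X ∉ A}] - θ` is continuous
on `[0, 1]` and negative at `1` because `p(A) > 0`; hence the least element `q` of `IA p A` lies in
`(0, 1)` and is a zero of this map, which forces `cA p A q = 0`. The mean of `pMod p A θ` is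
`cA p A θ * E[X θ^X 1_{X ∈ A}] + θ⁻¹ * E[X θ^X 1_{X ∉ A}]`, which is continuous at `q`. Finally
`k q^(k-1) (1 - q) ≤ 1 - q^k` bounds the limit by `(p(Aᶜ) - q) / (1 - q) < 1`.
-/

open Filter Topology Set

/-- `restrictedPGF p S θ = E[θ^X 1_{X ∈ S}]` when `X` has law `p`. -/
noncomputable def restrictedPGF (a : ℕ → ℝ) (S : Set ℕ) (θ : ℝ) : ℝ :=
  ∑' k, θ ^ k * S.indicator a k

section RestrictedPGF

variable {a : ℕ → ℝ} {S : Set ℕ} {θ : ℝ}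

lemma abs_pow_mul_indicator_le (hθ : θ ∈ Icc (-1 : ℝ) 1) (k : ℕ) :
    |θ ^ k * S.indicator a k| ≤ |a k| := by
  have hpow : |θ| ^ k ≤ 1 := pow_le_one₀ (abs_nonneg θ) (abs_le.2 hθ)
  have hind : |S.indicator a k| ≤ |a k| := by
    by_cases hk : k ∈ S <;> simp [hk]
  rw [abs_mul, abs_pow]
  simpa using mul_le_mul hpow hind (abs_nonneg _) zero_le_one

lemma summable_pow_mul_indicator (ha : Summable a) (hθ : θ ∈ Icc (-1 : ℝ) 1) :
    Summable fun k => θ ^ k * S.indicator a k :=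
  .of_norm_bounded ha.abs (abs_pow_mul_indicator_le hθ)

lemma continuousOn_restrictedPGF (ha : Summable a) :
    ContinuousOn (restrictedPGF a S) (Icc (-1) 1) :=
  continuousOn_tsum (fun k => ((continuous_pow k).mul continuous_const).continuousOn) ha.abs
    fun k _ hθ => abs_pow_mul_indicator_le hθ k

lemma continuousAt_restrictedPGF (ha : Summable a) (hθ : θ ∈ Ioo (-1 : ℝ) 1) :
    ContinuousAt (restrictedPGF a S) θ :=
  (continuousOn_restrictedPGF ha).continuousAt (Icc_mem_nhds hθ.1 hθ.2)

lemma restrictedPGF_one : restrictedPGF a S 1 = ∑' k, S.indicator a k := by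
  simp [restrictedPGF]

lemma restrictedPGF_pos (ha : ∀ k, 0 ≤ a k) (has : Summable a) (hθ0 : 0 < θ) (hθ1 : θ ≤ 1)
    {k₀ : ℕ} (hk₀S : k₀ ∈ S) (hk₀ : 0 < a k₀) : 0 < restrictedPGF a S θ :=
  (summable_pow_mul_indicator has ⟨by linarith, hθ1⟩).tsum_pos
    (fun k => mul_nonneg (pow_nonneg hθ0.le k) (indicator_nonneg (fun j _ => ha j) k)) k₀
    (by rw [indicator_of_mem hk₀S]; positivity)

lemma tsum_indicator_pow_mul : ∑' k, S.indicator (fun k => θ ^ k * a k) k = restrictedPGF a S θ := by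
  simp only [indicator_mul_right, restrictedPGF]

lemma tsum_indicator_natCast_mul_zpow_sub_one (hθ : θ ≠ 0) :
    ∑' k, S.indicator (fun k => (k : ℝ) * θ ^ ((k : ℤ) - 1) * a k) k
      = θ⁻¹ * restrictedPGF (fun k : ℕ => (k : ℝ) * a k) S θ := by
  rw [restrictedPGF, ← tsum_mul_left]
  congr 1 with k
  by_cases hk : k ∈ S
  · simp only [zpow_sub_one₀ hθ, zpow_natCast, hk, indicator_of_mem]
    ring
  · simp [hk]

lemma tsum_indicator_compl (ha : Summable a) :
    ∑' k, Sᶜ.indicator a k = ∑' k, a k - ∑' k, S.indicator a k := by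
  rw [eq_sub_iff_add_eq, ← (ha.indicator _).tsum_add (ha.indicator _)]
  exact tsum_congr fun k => congrFun (indicator_compl_add_self S a) k

lemma natCast_mul_pow_mul_one_sub_le {q : ℝ} (hq0 : 0 ≤ q) (hq1 : q ≤ 1) (k : ℕ) :
    k * q ^ k * (1 - q) ≤ q * (1 - q ^ k) := by
  induction k with
  | zero => simp
  | succ k ih =>
    have hqk : q ^ k ≤ 1 := pow_le_one₀ hq0 hq1
    push_cast
    rw [pow_succ]
    nlinarith [mul_le_mul_of_nonneg_left ih hq0,
      mul_nonneg (mul_nonneg hq0 (sub_nonneg.2 hq1)) (sub_nonneg.2 hqk)]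

lemma inv_mul_restrictedPGF_natCast_mul_lt_one (ha : ∀ k, 0 ≤ a k) (has : Summable a)
    (hmean : Summable fun k : ℕ => (k : ℝ) * a k) {q : ℝ} (hq0 : 0 < q) (hq1 : q < 1)
    (hS : ∑' k, S.indicator a k < 1) (hq : restrictedPGF a S q = q) :
    q⁻¹ * restrictedPGF (fun k : ℕ => (k : ℝ) * a k) S q < 1 := by
  have hqI : q ∈ Icc (-1 : ℝ) 1 := ⟨by linarith, hq1.le⟩
  have hterm : ∀ k, q ^ k * S.indicator (fun k : ℕ => (k : ℝ) * a k) k * (1 - q)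
      ≤ q * (S.indicator a k - q ^ k * S.indicator a k) := by
    intro k
    by_cases hk : k ∈ S
    · simp only [indicator_of_mem hk]
      nlinarith [mul_le_mul_of_nonneg_right (natCast_mul_pow_mul_one_sub_le hq0.le hq1.le k) (ha k)]
    · simp [hk]
  have hbound : restrictedPGF (fun k : ℕ => (k : ℝ) * a k) S q * (1 - q)
      ≤ q * (∑' k, S.indicator a k - restrictedPGF a S q) := by
    simp only [restrictedPGF]
    rw [← tsum_mul_right, ← (has.indicator S).tsum_sub (summable_pow_mul_indicator has hqI),
      ← tsum_mul_left]
    exact ((summable_pow_mul_indicator hmean hqI).mul_right _).tsum_le_tsum hterm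
      (((has.indicator S).sub (summable_pow_mul_indicator has hqI)).mul_left _)
  rw [hq] at hbound
  rw [inv_mul_lt_one₀ hq0]
  nlinarith

end RestrictedPGF

section ModifiedDistribution

variable {p : ℕ → ℝ} {A : Set ℕ} {θ : ℝ}

lemma cA_eq : cA p A θ = (θ - restrictedPGF p Aᶜ θ) / (θ * restrictedPGF p A θ) := by
  simp only [cA, tsum_indicator_pow_mul]

lemma mul_pMod_eq (hθ : θ ≠ 0) (w : ℕ → ℝ) (k : ℕ) :
    w k * pMod p A θ k = cA p A θ * (θ ^ k * A.indicator (fun k => w k * p k) k)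
      + θ⁻¹ * (θ ^ k * Aᶜ.indicator (fun k => w k * p k) k) := by
  by_cases hk : k ∈ A
  · simp only [pMod, hk, if_true, indicator_of_mem, mem_compl_iff, not_true_eq_false,
      not_false_eq_true, indicator_of_notMem, mul_zero, add_zero]
    ring
  · simp only [pMod, hk, if_false, zpow_sub_one₀ hθ, zpow_natCast, not_false_eq_true,
      indicator_of_notMem, mul_zero, mem_compl_iff, indicator_of_mem, zero_add]
    ring

lemma tsum_mul_pMod (hθ0 : 0 < θ) (hθ1 : θ ≤ 1) {w : ℕ → ℝ}
    (hwp : Summable fun k => w k * p k) :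
    ∑' k, w k * pMod p A θ k = cA p A θ * restrictedPGF (fun k => w k * p k) A θ
      + θ⁻¹ * restrictedPGF (fun k => w k * p k) Aᶜ θ := by
  have hθ : θ ∈ Icc (-1 : ℝ) 1 := ⟨by linarith, hθ1⟩
  simp only [mul_pMod_eq hθ0.ne', restrictedPGF, ← tsum_mul_left]
  exact ((summable_pow_mul_indicator hwp hθ).mul_left _).tsum_add
    ((summable_pow_mul_indicator hwp hθ).mul_left _)

lemma tsum_pMod (hps : Summable p) (hθ0 : 0 < θ) (hθ1 : θ ≤ 1)
    (hA : restrictedPGF p A θ ≠ 0) : ∑' k, pMod p A θ k = 1 := by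
  have h := tsum_mul_pMod (A := A) hθ0 hθ1 (w := fun _ => 1) (by simpa using hps)
  simp only [one_mul] at h
  rw [h, cA_eq]
  field_simp
  ring

lemma cA_nonneg_iff (hθ0 : 0 < θ) (hA : 0 < restrictedPGF p A θ) :
    0 ≤ cA p A θ ↔ restrictedPGF p Aᶜ θ ≤ θ := by
  rw [cA_eq, le_div_iff₀ (by positivity), zero_mul, sub_nonneg]

variable {k₀ : ℕ}

lemma mem_IA_iff (hp : ∀ k, 0 ≤ p k) (hps : Summable p) (hk₀A : k₀ ∈ A) (hk₀ : 0 < p k₀)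
    (hθ0 : 0 < θ) (hθ1 : θ ≤ 1) : θ ∈ IA p A ↔ restrictedPGF p Aᶜ θ ≤ θ := by
  have hA := restrictedPGF_pos hp hps hθ0 hθ1 hk₀A hk₀
  rw [← cA_nonneg_iff hθ0 hA]
  constructor
  · rintro ⟨-, hnonneg, -⟩
    have h := hnonneg k₀
    rw [pMod, if_pos hk₀A, mul_assoc] at h
    exact (mul_nonneg_iff_of_pos_right (by positivity)).1 h
  · intro hc
    refine ⟨hθ0, fun k => ?_, tsum_pMod hps hθ0 hθ1 hA.ne'⟩
    have hind : ∀ S : Set ℕ, 0 ≤ θ ^ k * S.indicator (fun k => 1 * p k) k := fun S =>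
      mul_nonneg (pow_nonneg hθ0.le k) (indicator_nonneg (fun j _ => by simpa using hp j) k)
    rw [← one_mul (pMod p A θ k), mul_pMod_eq hθ0.ne' fun _ => 1]
    exact add_nonneg (mul_nonneg hc (hind A)) (mul_nonneg (inv_nonneg.2 hθ0.le) (hind Aᶜ))

lemma exists_lt_mem_IA (hp : ∀ k, 0 ≤ p k) (hps : Summable p) (hk₀A : k₀ ∈ A) (hk₀ : 0 < p k₀)
    {t : ℝ} (ht0 : 0 < t) (ht1 : t ≤ 1) (ht : restrictedPGF p Aᶜ t < t) :
    ∃ θ < t, θ ∈ IA p A := by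
  have hcont : ContinuousWithinAt (restrictedPGF p Aᶜ) (Iio t) t :=
    (continuousOn_restrictedPGF hps t ⟨by linarith, ht1⟩).mono_of_mem_nhdsWithin <|
      mem_of_superset (Ioo_mem_nhdsLT (by linarith : (-1 : ℝ) < t))
        fun x hx => ⟨hx.1.le, by linarith [hx.2]⟩
  have hbelow : ∀ᶠ θ in 𝓝[<] t, restrictedPGF p Aᶜ θ - θ < 0 :=
    (hcont.sub continuousWithinAt_id).tendsto.eventually_lt_const (sub_neg.2 ht)
  obtain ⟨θ, hθ, hθt⟩ := (hbelow.and (Ioo_mem_nhdsLT ht0)).exists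
  exact ⟨θ, hθt.2, (mem_IA_iff hp hps hk₀A hk₀ hθt.1 (hθt.2.le.trans ht1)).2 (by linarith)⟩

lemma restrictedPGF_compl_eq_of_isLeast_IA (hp : ∀ k, 0 ≤ p k) (hps : Summable p)
    (hk₀A : k₀ ∈ A) (hk₀ : 0 < p k₀) (hAc : ∑' k, Aᶜ.indicator p k < 1) {q : ℝ}
    (hq : IsLeast (IA p A) q) : q < 1 ∧ restrictedPGF p Aᶜ q = q := by
  obtain ⟨hqI, hqmin⟩ := hq
  have hq1 : q ≤ 1 :=
    hqmin ((mem_IA_iff hp hps hk₀A hk₀ one_pos le_rfl).2 (by rw [restrictedPGF_one]; exact hAc.le))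
  have hle : ∀ t, 0 < t → t ≤ q → t ≤ restrictedPGF p Aᶜ t := by
    intro t ht0 htq
    by_contra! h
    obtain ⟨θ, hθt, hθ⟩ := exists_lt_mem_IA hp hps hk₀A hk₀ ht0 (htq.trans hq1) h
    linarith [hqmin hθ]
  refine ⟨hq1.lt_of_ne fun h => ?_, le_antisymm ?_ (hle q hqI.1 le_rfl)⟩
  · have := hle 1 one_pos h.ge
    rw [restrictedPGF_one] at this
    linarith
  · exact (mem_IA_iff hp hps hk₀A hk₀ hqI.1 hq1).1 hqI

lemma tendsto_tsum_natCast_mul_pMod (hps : Summable p) (hmean : Summable fun k : ℕ => (k : ℝ) * p k)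
    {q : ℝ} (hq0 : 0 < q) (hq1 : q < 1) (hA : restrictedPGF p A q ≠ 0) :
    Tendsto (fun θ => ∑' k : ℕ, (k : ℝ) * pMod p A θ k) (𝓝[>] q)
      (𝓝 (cA p A q * restrictedPGF (fun k : ℕ => (k : ℝ) * p k) A q
        + q⁻¹ * restrictedPGF (fun k : ℕ => (k : ℝ) * p k) Aᶜ q)) := by
  have hq : q ∈ Ioo (-1 : ℝ) 1 := ⟨by linarith, hq1⟩
  have hcA : ContinuousAt (cA p A) q := by
    simp only [funext fun θ => cA_eq (p := p) (A := A) (θ := θ)]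
    exact (continuousAt_id.sub (continuousAt_restrictedPGF hps hq)).div
      (continuousAt_id.mul (continuousAt_restrictedPGF hps hq)) (mul_ne_zero hq0.ne' hA)
  have hlim := ((hcA.mul (continuousAt_restrictedPGF (S := A) hmean hq)).add
    ((continuousAt_inv₀ hq0.ne').mul (continuousAt_restrictedPGF (S := Aᶜ) hmean hq))).tendsto
  refine (hlim.mono_left nhdsWithin_le_nhds).congr' ?_
  filter_upwards [Ioo_mem_nhdsGT hq1] with θ hθ
  exact (tsum_mul_pMod (hq0.trans hθ.1) hθ.2.le hmean).symm

end ModifiedDistribution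

open Filter in
theorem stmt4_general (p : ℕ → ℝ) (A : Set ℕ) (q : ℝ)
    (hp : ∀ k, 0 ≤ p k) (hpsum : ∑' k, p k = 1)
    (hmean : Summable (fun k : ℕ => (k : ℝ) * p k))
    (hApos : 0 < ∑' k : ℕ, A.indicator p k)
    (hq : IsLeast (IA p A) q) :
    cA p A q = 0
    ∧ (∑' k : ℕ, (Aᶜ).indicator (fun k => q ^ k * p k) k) = q
    ∧ Tendsto (fun θ : ℝ => ∑' k : ℕ, (k : ℝ) * pMod p A θ k)
        (nhdsWithin q (Set.Ioi q))
        (nhds (∑' k : ℕ, (Aᶜ).indicator (fun k => (k : ℝ) * q ^ ((k : ℤ) - 1) * p k) k))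
    ∧ (∑' k : ℕ, (Aᶜ).indicator (fun k => (k : ℝ) * q ^ ((k : ℤ) - 1) * p k) k) < 1 := by
  have hps : Summable p := by
    by_contra h
    simp [tsum_eq_zero_of_not_summable h] at hpsum
  obtain ⟨k₀, hk₀A, hk₀⟩ : ∃ k ∈ A, 0 < p k := by
    by_contra! h
    exact hApos.not_ge (tsum_nonpos (indicator_nonpos h))
  have hAc : ∑' k, Aᶜ.indicator p k < 1 := by
    rw [tsum_indicator_compl hps, hpsum]
    linarith
  have hq0 : 0 < q := hq.1.1
  obtain ⟨hq1, hqfix⟩ := restrictedPGF_compl_eq_of_isLeast_IA hp hps hk₀A hk₀ hAc hq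
  have hc : cA p A q = 0 := by rw [cA_eq, hqfix, sub_self, zero_div]
  have hlim := tendsto_tsum_natCast_mul_pMod hps hmean hq0 hq1
    (restrictedPGF_pos hp hps hq0 hq1.le hk₀A hk₀).ne'
  rw [hc, zero_mul, zero_add, ← tsum_indicator_natCast_mul_zpow_sub_one hq0.ne'] at hlim
  refine ⟨hc, tsum_indicator_pow_mul.trans hqfix, hlim, ?_⟩
  rw [tsum_indicator_natCast_mul_zpow_sub_one hq0.ne']
  exact inv_mul_restrictedPGF_natCast_mul_lt_one hp hps hmean hq0 hq1 hAc hqfix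

open Filter in
theorem stmt4 (p : ℕ → ℝ) (A : Set ℕ) (q : ℝ)
    (hp : ∀ k, 0 ≤ p k) (hpsum : ∑' k, p k = 1)
    (hp0 : 0 < p 0) (hp01 : p 0 + p 1 < 1)
    (hmean : Summable (fun k : ℕ => (k : ℝ) * p k))
    (hsub : ∑' k : ℕ, (k : ℝ) * p k < 1)
    (h0A : 0 ∉ A) (hApos : 0 < ∑' k : ℕ, A.indicator p k)
    (hq : IsLeast (IA p A) q) :
    cA p A q = 0
    ∧ (∑' k : ℕ, (Aᶜ).indicator (fun k => q ^ k * p k) k) = q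
    ∧ Tendsto (fun θ : ℝ => ∑' k : ℕ, (k : ℝ) * pMod p A θ k)
        (nhdsWithin q (Set.Ioi q))
        (nhds (∑' k : ℕ, (Aᶜ).indicator (fun k => (k : ℝ) * q ^ ((k : ℤ) - 1) * p k) k))
    ∧ (∑' k : ℕ, (Aᶜ).indicator (fun k => (k : ℝ) * q ^ ((k : ℤ) - 1) * p k) k) < 1 :=
  stmt4_general p A q hp hpsum hmean hApos hq
end

section
/- Let G be a generating function of a probability distribution with radius of convergence 1 and G'(1)=1, and let c ∈ (0,1). Define the distribution p by its generating function g(z) = G(cz)/G(c). Then G(c) > c, the radius of convergence of g is ρ = 1/c, g_{ℕ,ρ}'(1) = G'(1) = 1, and g_{{0},ρ}'(1) = cG'(1)/G(c) < 1; hence p is generic for ℕ but non-generic for {0}. -/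
open scoped Classical

/-!
Since `G` is convex with `G(1) = G'(1) = 1`, it lies above its tangent `z ↦ z` at `1`, strictly
because `G` is not affine (otherwise its radius of convergence would be infinite); hence
`G(c) > c`. For the tilted distribution `p_k = q_k c^k / G(c)` the modification at `ρ = 1/c` for
`A = ℕ` undoes the tilt and gives back `q`, whereas for `A = {0}` the mean of `p_{{0},θ}` is
`(c / G(c)) G'(θc)`. The latter is at most `c / G(c) < 1` when `θc ≤ 1`, and for `θc > 1` the
series `G'(θc)` diverges, so its `tsum` is `0`.
-/

open Set

section PowerSeries

variable {q : ℕ → ℝ}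

lemma one_add_mul_sub_one_lt_pow {c : ℝ} (hc0 : 0 ≤ c) (hc1 : c ≠ 1) {k : ℕ} (hk : 2 ≤ k) :
    1 + k * (c - 1) < c ^ k := by
  have h := one_add_mul_self_lt_rpow_one_add (s := c - 1) (by linarith) (sub_ne_zero.mpr hc1)
    (p := k) (by exact_mod_cast hk)
  rwa [add_sub_cancel, Real.rpow_natCast] at h

lemma summable_mul_pow_of_le_one (hq : ∀ k, 0 ≤ q k) (hqS : Summable q) {r : ℝ} (hr0 : 0 ≤ r)
    (hr1 : r ≤ 1) : Summable fun k => q k * r ^ k :=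
  hqS.of_nonneg_of_le (fun k => mul_nonneg (hq k) (pow_nonneg hr0 k))
    fun k => mul_le_of_le_one_right (hq k) (pow_le_one₀ hr0 hr1)

lemma exists_two_le_ne_zero_of_not_summable_mul_pow {r : ℝ}
    (h : ¬ Summable fun k => q k * r ^ k) : ∃ k, 2 ≤ k ∧ q k ≠ 0 := by
  contrapose! h
  refine summable_of_ne_finset_zero (s := {0, 1}) fun k hk => ?_
  simp [h k (by simp at hk; omega)]

lemma tsum_add_mul_tsum_lt_tsum_mul_pow (hq : ∀ k, 0 ≤ q k) (hqS : Summable q)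
    (hmean : Summable fun k : ℕ => (k : ℝ) * q k) {k₀ : ℕ} (hk₀ : 2 ≤ k₀) (hqk₀ : 0 < q k₀)
    {c : ℝ} (hc0 : 0 ≤ c) (hc1 : c < 1) :
    ∑' k, q k + (c - 1) * ∑' k : ℕ, (k : ℝ) * q k < ∑' k, q k * c ^ k := by
  have hle (k : ℕ) : q k + (c - 1) * (k * q k) ≤ q k * c ^ k := by
    have := mul_le_mul_of_nonneg_left (one_add_mul_sub_le_pow (a := c) (by linarith) k) (hq k)
    linarith
  have hlt : q k₀ + (c - 1) * (k₀ * q k₀) < q k₀ * c ^ k₀ := by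
    have := mul_lt_mul_of_pos_left (one_add_mul_sub_one_lt_pow hc0 hc1.ne hk₀) hqk₀
    linarith
  calc ∑' k, q k + (c - 1) * ∑' k : ℕ, (k : ℝ) * q k
      = ∑' k : ℕ, (q k + (c - 1) * (k * q k)) := by
        rw [hqS.tsum_add (hmean.mul_left _), tsum_mul_left]
    _ < ∑' k, q k * c ^ k :=
        (hqS.add (hmean.mul_left _)).tsum_lt_tsum hle hlt
          (summable_mul_pow_of_le_one hq hqS hc0 hc1.le)

lemma not_summable_natCast_mul_mul_pow_sub_one (hq : ∀ k, 0 ≤ q k) {s : ℝ} (hs : 0 ≤ s)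
    (h : ¬ Summable fun k => q k * s ^ k) :
    ¬ Summable fun k : ℕ => k * q k * s ^ (k - 1) := by
  refine fun hS => h <| (hS.mul_left s).of_norm_bounded_eventually_nat ?_
  filter_upwards [Filter.eventually_ge_atTop 1] with k hk
  have hsk : s ^ k = s * s ^ (k - 1) := by rw [← pow_succ', Nat.sub_add_cancel hk]
  have hk1 : (1 : ℝ) ≤ k := by exact_mod_cast hk
  rw [Real.norm_of_nonneg (mul_nonneg (hq k) (pow_nonneg hs k)), hsk]
  have := mul_nonneg (mul_nonneg hs (pow_nonneg hs (k - 1))) (hq k)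
  nlinarith

/-- The left side is `G'(s)` where the derived series converges and the junk value `0` where it
diverges. -/
lemma tsum_natCast_mul_mul_pow_sub_one_le (hq : ∀ k, 0 ≤ q k)
    (hrad : ∀ r : ℝ, 1 < r → ¬ Summable fun k => q k * r ^ k)
    (hmean : Summable fun k : ℕ => (k : ℝ) * q k) {s : ℝ} (hs : 0 ≤ s) :
    ∑' k : ℕ, k * q k * s ^ (k - 1) ≤ ∑' k : ℕ, (k : ℝ) * q k := by
  have hkq (k : ℕ) : 0 ≤ (k : ℝ) * q k := mul_nonneg k.cast_nonneg (hq k)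
  rcases le_or_gt s 1 with hs1 | hs1
  · have hle (k : ℕ) : k * q k * s ^ (k - 1) ≤ k * q k :=
      mul_le_of_le_one_right (hkq k) (pow_le_one₀ hs hs1)
    exact (hmean.of_nonneg_of_le (fun k => mul_nonneg (hkq k) (pow_nonneg hs _)) hle).tsum_le_tsum
      hle hmean
  · rw [tsum_eq_zero_of_not_summable
      (not_summable_natCast_mul_mul_pow_sub_one hq hs (hrad s hs1))]
    exact tsum_nonneg hkq

end PowerSeries

section ModifiedDistribution

variable {p : ℕ → ℝ}

lemma pMod_univ {θ : ℝ} (hθ : θ ≠ 0) (k : ℕ) :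
    pMod p univ θ k = θ ^ k * p k / ∑' j, θ ^ j * p j := by
  simp only [pMod, cA, mem_univ, if_true, compl_univ, indicator_empty, indicator_univ, tsum_zero,
    sub_zero]
  rw [div_mul_cancel_left₀ hθ]
  ring

lemma natCast_mul_pMod_singleton_zero (θ : ℝ) (k : ℕ) :
    k * pMod p {0} θ k = k * θ ^ (k - 1) * p k := by
  rcases k with _ | k
  · simp
  · simp [pMod, mul_assoc]

variable {q : ℕ → ℝ} {c s : ℝ}

lemma mul_pow_eq_of_tilt (hp : ∀ k, p k = q k * c ^ k / s) (r : ℝ) (k : ℕ) :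
    p k * r ^ k = q k * (c * r) ^ k / s := by
  rw [hp, mul_pow]
  ring

lemma pMod_univ_inv_of_tilt (hp : ∀ k, p k = q k * c ^ k / s) (hc : c ≠ 0) (hs : s ≠ 0) :
    pMod p univ c⁻¹ = fun k => q k / ∑' j, q j := by
  have htilt (k : ℕ) : c⁻¹ ^ k * p k = q k / s := by
    rw [mul_comm, mul_pow_eq_of_tilt hp, mul_inv_cancel₀ hc, one_pow, mul_one]
  ext k
  rw [pMod_univ (inv_ne_zero hc), htilt, tsum_congr htilt, tsum_div_const, div_div_div_cancel_right₀ hs]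

lemma natCast_mul_pMod_singleton_zero_of_tilt (hp : ∀ k, p k = q k * c ^ k / s) (θ : ℝ) (k : ℕ) :
    k * pMod p {0} θ k = c / s * (k * q k * (θ * c) ^ (k - 1)) := by
  rw [natCast_mul_pMod_singleton_zero, hp]
  rcases k with _ | k
  · simp
  · rw [pow_succ', Nat.add_sub_cancel, mul_pow]
    ring

end ModifiedDistribution

theorem stmt8 (q : ℕ → ℝ) (c : ℝ)
    (hq : ∀ k, 0 ≤ q k) (hqsum : ∑' k, q k = 1)
    -- the radius of convergence of `G` is `1` (it is automatically `≥ 1`)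
    (hradG : ∀ r : ℝ, 1 < r → ¬ Summable (fun k : ℕ => q k * r ^ k))
    -- `G'(1) = 1`
    (hGmean : Summable (fun k : ℕ => (k : ℝ) * q k))
    (hG'1 : ∑' k : ℕ, (k : ℝ) * q k = 1)
    (hc0 : 0 < c) (hc1 : c < 1)
    -- `p` is the distribution with generating function `g(z) = G(cz)/G(c)`
    (p : ℕ → ℝ) (hpdef : ∀ k, p k = q k * c ^ k / ∑' j : ℕ, q j * c ^ j) :
    -- `G(c) > c`
    c < (∑' j : ℕ, q j * c ^ j)
    -- the radius of convergence of `g` is `ρ = 1/c`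
    ∧ (∀ r : ℝ, 0 ≤ r → r < 1 / c → Summable (fun k : ℕ => p k * r ^ k))
    ∧ (∀ r : ℝ, 1 / c < r → ¬ Summable (fun k : ℕ => p k * r ^ k))
    -- `g_{ℕ,ρ}'(1) = G'(1) = 1`
    ∧ (∑' k : ℕ, (k : ℝ) * pMod p Set.univ (1 / c) k) = 1
    -- `g_{{0},ρ}'(1) = c G'(1)/G(c) < 1`
    ∧ (∑' k : ℕ, (k : ℝ) * pMod p {0} (1 / c) k) = c / (∑' j : ℕ, q j * c ^ j)
    ∧ c / (∑' j : ℕ, q j * c ^ j) < 1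
    -- hence `p` is generic for `ℕ` but non-generic for `{0}`
    ∧ (∃ θ ∈ IA p Set.univ, (∑' k : ℕ, (k : ℝ) * pMod p Set.univ θ k) = 1)
    ∧ (¬ ∃ θ ∈ IA p {0}, (∑' k : ℕ, (k : ℝ) * pMod p {0} θ k) = 1) := by
  set Gc := ∑' j : ℕ, q j * c ^ j
  have hqS : Summable q := by
    by_contra h
    simp [tsum_eq_zero_of_not_summable h] at hqsum
  obtain ⟨k₀, hk₀, hqk₀⟩ := exists_two_le_ne_zero_of_not_summable_mul_pow (hradG 2 one_lt_two)
  have hGc : c < Gc := by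
    simpa [hqsum, hG'1] using tsum_add_mul_tsum_lt_tsum_mul_pow hq hqS hGmean hk₀
      ((hq k₀).lt_of_ne' hqk₀) hc0.le hc1
  have hGc0 : 0 < Gc := hc0.trans hGc
  have hsummable (r : ℝ) : Summable (fun k => p k * r ^ k) ↔ Summable fun k => q k * (c * r) ^ k := by
    simp_rw [mul_pow_eq_of_tilt hpdef]
    exact summable_div_const_iff hGc0.ne'
  have hpuniv : pMod p univ (1 / c) = q := by
    rw [one_div, pMod_univ_inv_of_tilt hpdef hc0.ne' hGc0.ne', hqsum]
    simp
  have hmean0 (θ : ℝ) :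
      ∑' k : ℕ, k * pMod p {0} θ k = c / Gc * ∑' k : ℕ, k * q k * (θ * c) ^ (k - 1) := by
    simp_rw [natCast_mul_pMod_singleton_zero_of_tilt hpdef]
    exact tsum_mul_left
  have hfrac : c / Gc < 1 := (div_lt_one hGc0).mpr hGc
  refine ⟨hGc, fun r hr hrc => ?_, fun r hrc hS => ?_, by rw [hpuniv, hG'1], ?_, hfrac,
    ⟨1 / c, ⟨by positivity, by rwa [hpuniv], by rw [hpuniv, hqsum]⟩, by rw [hpuniv, hG'1]⟩, ?_⟩
  · rw [lt_div_iff₀ hc0, mul_comm] at hrc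
    exact (hsummable r).mpr (summable_mul_pow_of_le_one hq hqS (by positivity) hrc.le)
  · rw [div_lt_iff₀ hc0, mul_comm] at hrc
    exact hradG _ hrc ((hsummable r).mp hS)
  · rw [hmean0, one_div_mul_cancel hc0.ne']
    simp [hG'1]
  · rintro ⟨θ, ⟨hθ, -, -⟩, hθmean⟩
    have hle := tsum_natCast_mul_mul_pow_sub_one_le hq hradG hGmean (mul_nonneg hθ.le hc0.le)
    rw [hmean0] at hθmean
    rw [hG'1] at hle
    nlinarith [div_pos hc0 hGc0]
end

section
/- Let p be an offspring distribution on ℕ, A ⊆ ℕ with 0∈A and p(A)>0. Let N be geometric with success parameter p(A) (P(N=n)=p(A)(1−p(A))^{n−1} for n≥1), Y'' distributed as X conditioned on X∈A, and (Y'_k) i.i.d. distributed as X−1 conditioned on X∉A, all independent. Set X_A = Σ_{k=1}^{N−1} Y'_k + Y''. Then the generating function of X_A is g^A(z) = z·E[z^X 1_{X∈A}] / (z − E[z^X 1_{X∉A}]). -/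
open scoped Classical ENNReal

noncomputable def myGE (q : PMF ℕ) (w : ℝ≥0∞) : ℝ≥0∞ := ∑' k, q k * w ^ k

lemma myGE_pure (m : ℕ) (w : ℝ≥0∞) : myGE (PMF.pure m) w = w ^ m := by
  unfold myGE
  rw [tsum_eq_single m]
  · simp [PMF.pure_apply]
  · intro b hb; simp [PMF.pure_apply, hb]

lemma myGE_bind (q : PMF ℕ) (f : ℕ → PMF ℕ) (w : ℝ≥0∞) :
    myGE (q.bind f) w = ∑' a, q a * myGE (f a) w := by
  unfold myGE
  simp only [PMF.bind_apply]
  rw [show (∑' k, (∑' a, q a * f a k) * w ^ k) = ∑' k, ∑' a, q a * f a k * w ^ k from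
    tsum_congr fun k => ENNReal.tsum_mul_right.symm]
  rw [ENNReal.tsum_comm]
  exact tsum_congr fun a => by rw [← ENNReal.tsum_mul_left]; exact tsum_congr fun k => by ring

lemma myGE_map_add (r : PMF ℕ) (a : ℕ) (w : ℝ≥0∞) :
    myGE (r.map fun b => a + b) w = w ^ a * myGE r w := by
  rw [PMF.map, myGE_bind]
  simp only [Function.comp, myGE_pure, pow_add]
  unfold myGE
  rw [← ENNReal.tsum_mul_left]
  exact tsum_congr fun b => by ring

/-- Law of the sum of `n` i.i.d. copies drawn from `q`. -/
noncomputable def sumIid (q : PMF ℕ) : ℕ → PMF ℕ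
  | 0 => PMF.pure 0
  | n + 1 => q.bind fun a => (sumIid q n).map fun b => a + b

/-- Law of `X_A = Σ_{k=1}^{N-1} Y'_k + Y''`. -/
noncomputable def pXA (pN pY' pY'' : PMF ℕ) : PMF ℕ :=
  pN.bind fun n => (sumIid pY' (n - 1)).bind fun s => pY''.map fun y => s + y

lemma myGE_sumIid (q : PMF ℕ) (w : ℝ≥0∞) : ∀ n, myGE (sumIid q n) w = (myGE q w) ^ n
  | 0 => by simp [sumIid, myGE_pure]
  | n + 1 => by
    rw [sumIid, myGE_bind]
    simp only [myGE_map_add, myGE_sumIid q w n]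
    rw [show (∑' a, q a * (w ^ a * myGE q w ^ n)) = (∑' a, q a * w ^ a) * myGE q w ^ n from
      by rw [← ENNReal.tsum_mul_right]; exact tsum_congr fun a => by ring]
    rw [pow_succ']
    rfl

lemma myGE_pXA (pN pY' pY'' : PMF ℕ) (w : ℝ≥0∞) :
    myGE (pXA pN pY' pY'') w
      = ∑' n, pN n * ((myGE pY' w) ^ (n - 1) * myGE pY'' w) := by
  unfold pXA
  rw [myGE_bind]
  refine tsum_congr fun n => ?_
  rw [myGE_bind]
  congr 1
  rw [show (∑' s, (sumIid pY' (n-1)) s * myGE (pY''.map fun y => s + y) w)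
      = ∑' s, (sumIid pY' (n-1)) s * w ^ s * myGE pY'' w from
    tsum_congr fun s => by rw [myGE_map_add]; ring]
  rw [ENNReal.tsum_mul_right, ← myGE_sumIid]
  rfl

lemma myGE_eq_ofReal (q : PMF ℕ) (g : ℕ → ℝ) (hg : ∀ k, 0 ≤ g k)
    (hq : ∀ k, q k = ENNReal.ofReal (g k)) (z : ℝ) (hz : 0 ≤ z)
    (hsum : Summable fun k => g k * z ^ k) :
    myGE q (ENNReal.ofReal z) = ENNReal.ofReal (∑' k, g k * z ^ k) := by
  unfold myGE
  rw [ENNReal.ofReal_tsum_of_nonneg (fun k => mul_nonneg (hg k) (pow_nonneg hz k)) hsum]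
  exact tsum_congr fun k => by
    rw [hq k, ← ENNReal.ofReal_pow hz, ← ENNReal.ofReal_mul (hg k)]

theorem stmt9 (p : ℕ → ℝ) (A : Set ℕ)
    (hp : ∀ k, 0 ≤ p k) (hpsum : ∑' k, p k = 1)
    (hp0 : 0 < p 0) (hp01 : p 0 + p 1 < 1)
    (h0A : 0 ∈ A) (hApos : 0 < ∑' k : ℕ, A.indicator p k)
    (pN pY' pY'' : PMF ℕ)
    -- `N` is geometric with success parameter `p(A)`
    (hN : ∀ n : ℕ, pN n = if 1 ≤ n then
        ENNReal.ofReal ((∑' k : ℕ, A.indicator p k)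
          * (1 - ∑' k : ℕ, A.indicator p k) ^ (n - 1)) else 0)
    -- `Y''` is distributed as `X` conditioned on `X ∈ A`
    (hY'' : ∀ k : ℕ, pY'' k = if k ∈ A then
        ENNReal.ofReal (p k / ∑' j : ℕ, A.indicator p j) else 0)
    -- each `Y'` is distributed as `X - 1` conditioned on `X ∉ A`
    (hY' : ∀ k : ℕ, pY' k = if (k + 1) ∈ A then 0 else
        ENNReal.ofReal (p (k + 1) / (1 - ∑' j : ℕ, A.indicator p j))) :
    -- the generating function of `X_A`
    ∀ z : ℝ, 0 < z → z < 1 →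
      (∑' k : ℕ, ((pXA pN pY' pY'') k).toReal * z ^ k)
        = z * (∑' k : ℕ, A.indicator (fun k => z ^ k * p k) k)
          / (z - ∑' k : ℕ, (Aᶜ).indicator (fun k => z ^ k * p k) k) := by
  intro z hz0 hz1
  set a : ℝ := ∑' k : ℕ, A.indicator p k with ha_def
  -- summability of p
  have hpS : Summable p := by
    by_contra h
    rw [tsum_eq_zero_of_not_summable h] at hpsum
    norm_num at hpsum
  have hzk : ∀ k : ℕ, z ^ k ≤ 1 := fun k => pow_le_one₀ hz0.le hz1.le
  have hzkpos : ∀ k : ℕ, 0 ≤ z ^ k := fun k => pow_nonneg hz0.le k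
  -- a < 1
  have ha1 : a < 1 := by
    by_contra h
    push_neg at h
    have hzero : ∀ k, pY' k = 0 := by
      intro k
      rw [hY' k]
      split_ifs with hk
      · rfl
      · rw [ENNReal.ofReal_eq_zero]
        exact div_nonpos_iff.2 (Or.inl ⟨hp _, by linarith⟩)
    have := pY'.tsum_coe
    simp only [hzero, tsum_zero] at this
    exact zero_ne_one this
  have ha1' : (0:ℝ) < 1 - a := by linarith
  -- indicator sums
  have hAindS : Summable (A.indicator p) :=
    hpS.of_nonneg_of_le (fun k => Set.indicator_nonneg (fun j _ => hp j) k)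
      (fun k => Set.indicator_le_self' (fun j _ => hp j) k)
  have hCindS : Summable ((Aᶜ).indicator p) :=
    hpS.of_nonneg_of_le (fun k => Set.indicator_nonneg (fun j _ => hp j) k)
      (fun k => Set.indicator_le_self' (fun j _ => hp j) k)
  have hsplit : ∑' k, (Aᶜ).indicator p k = 1 - a := by
    have := Summable.tsum_add hAindS hCindS
    rw [show (fun k => A.indicator p k + (Aᶜ).indicator p k) = p from
      funext fun k => by
        simpa using congrFun (Set.indicator_self_add_compl A p) k] at this
    rw [hpsum] at this
    linarith [this]
  -- fA, fC
  set fA : ℝ := ∑' k : ℕ, A.indicator (fun k => z ^ k * p k) k with hfA_def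
  set fC : ℝ := ∑' k : ℕ, (Aᶜ).indicator (fun k => z ^ k * p k) k with hfC_def
  have hfA0 : 0 ≤ fA := tsum_nonneg fun k =>
    Set.indicator_nonneg (fun j _ => mul_nonneg (hzkpos j) (hp j)) k
  have hfC0 : 0 ≤ fC := tsum_nonneg fun k =>
    Set.indicator_nonneg (fun j _ => mul_nonneg (hzkpos j) (hp j)) k
  have hfCS : Summable ((Aᶜ).indicator (fun k => z ^ k * p k)) :=
    hpS.of_nonneg_of_le
      (fun k => Set.indicator_nonneg (fun j _ => mul_nonneg (hzkpos j) (hp j)) k)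
      (fun k => le_trans (Set.indicator_le_self' (fun j _ => mul_nonneg (hzkpos j) (hp j)) k)
        (by nlinarith [hzk k, hp k, hzkpos k]))
  set w : ℝ≥0∞ := ENNReal.ofReal z with hw_def
  -- generating function of Y''
  have hgY'' : ∀ k, (0:ℝ) ≤ (if k ∈ A then p k / a else 0) := by
    intro k; split_ifs
    · exact div_nonneg (hp k) hApos.le
    · exact le_refl 0
  have hc : myGE pY'' w = ENNReal.ofReal (fA / a) := by
    have hsumY'' : Summable fun k => (if k ∈ A then p k / a else 0) * z ^ k := by
      refine (hpS.div_const a).of_nonneg_of_le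
        (fun k => mul_nonneg (hgY'' k) (hzkpos k)) (fun k => ?_)
      split_ifs with hk
      · calc p k / a * z ^ k ≤ p k / a * 1 :=
            mul_le_mul_of_nonneg_left (hzk k) (div_nonneg (hp k) hApos.le)
          _ = p k / a := mul_one _
      · simpa using div_nonneg (hp k) hApos.le
    rw [myGE_eq_ofReal pY'' _ hgY''
      (fun k => by rw [hY'' k]; split_ifs <;> simp) z hz0.le hsumY'']
    congr 1
    rw [hfA_def, ← tsum_div_const]
    refine tsum_congr fun k => ?_
    by_cases hk : k ∈ A
    · rw [Set.indicator_of_mem hk, if_pos hk]; ring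
    · rw [Set.indicator_of_notMem hk, if_neg hk]; simp
  -- generating function of Y'
  set g' : ℕ → ℝ := fun k => if (k+1) ∈ A then 0 else p (k+1) / (1-a) with hg'_def
  have hg'0 : ∀ k, 0 ≤ g' k := fun k => by
    rw [hg'_def]; dsimp only; split_ifs
    · exact le_refl 0
    · exact div_nonneg (hp _) ha1'.le
  have hpS1 : Summable fun k => p (k+1) := (summable_nat_add_iff 1).2 hpS
  have hg'le : ∀ k, g' k ≤ p (k+1) / (1-a) := fun k => by
    rw [hg'_def]; dsimp only; split_ifs with hk
    · exact div_nonneg (hp _) ha1'.le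
    · exact le_refl _
  have hg'S : Summable fun k => g' k * z ^ k := by
    refine (hpS1.div_const (1-a)).of_nonneg_of_le
      (fun k => mul_nonneg (hg'0 k) (hzkpos k)) (fun k => ?_)
    calc g' k * z ^ k ≤ g' k * 1 := mul_le_mul_of_nonneg_left (hzk k) (hg'0 k)
      _ = g' k := mul_one _
      _ ≤ _ := hg'le k
  have hg'S0 : Summable g' :=
    (hpS1.div_const (1-a)).of_nonneg_of_le hg'0 hg'le
  set S : ℝ := ∑' k, g' k * z ^ k with hS_def
  have hS0 : 0 ≤ S := tsum_nonneg fun k => mul_nonneg (hg'0 k) (hzkpos k)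
  have hb : myGE pY' w = ENNReal.ofReal S :=
    myGE_eq_ofReal pY' g' hg'0
      (fun k => by rw [hY' k, hg'_def]; by_cases hk : (k+1) ∈ A <;> simp [hk]) z hz0.le hg'S
  -- shift identity relating fC and S
  have hshift : fC = z * ((1-a) * S) := by
    rw [hfC_def, Summable.tsum_eq_zero_add hfCS,
      Set.indicator_of_notMem (by simpa using h0A) _, zero_add, hS_def,
      ← tsum_mul_left, ← tsum_mul_left]
    refine tsum_congr fun k => ?_
    by_cases hk : (k+1) ∈ A
    · rw [Set.indicator_of_notMem (by simpa using hk)]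
      rw [hg'_def]; dsimp only; rw [if_pos hk]; ring
    · rw [Set.indicator_of_mem (by simpa using hk)]
      rw [hg'_def]; dsimp only; rw [if_neg hk]
      field_simp
      ring
  -- bound S ≤ 1
  have hS1 : S ≤ 1 := by
    have h1 : S ≤ ∑' k, g' k := by
      refine Summable.tsum_le_tsum (fun k => ?_) hg'S hg'S0
      calc g' k * z ^ k ≤ g' k * 1 := mul_le_mul_of_nonneg_left (hzk k) (hg'0 k)
        _ = g' k := mul_one _
    have h3 : ∀ k : ℕ, g' k = (Aᶜ).indicator p (k+1) / (1-a) := fun k => by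
      by_cases hk : (k+1) ∈ A
      · rw [Set.indicator_of_notMem (by simpa using hk)]
        rw [hg'_def]; dsimp only; rw [if_pos hk]; simp
      · rw [Set.indicator_of_mem (by simpa using hk)]
        rw [hg'_def]; dsimp only; rw [if_neg hk]
    have h4 : ∑' k : ℕ, (Aᶜ).indicator p (k+1) = 1 - a := by
      have h5 := Summable.tsum_eq_zero_add hCindS
      rw [Set.indicator_of_notMem (show (0:ℕ) ∉ Aᶜ by simpa using h0A), zero_add,
        hsplit] at h5
      exact h5.symm
    have h2 : ∑' k, g' k = 1 := by
      rw [tsum_congr h3, tsum_div_const, h4, div_self (ne_of_gt ha1')]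
    rw [← h2]; exact h1
  have hfCz_eq : fC / z = (1-a) * S := by
    rw [hshift, mul_div_cancel_left₀ _ (ne_of_gt hz0)]
  have hfCz1 : fC / z < 1 := by
    rw [hfCz_eq]
    calc (1-a) * S ≤ (1-a) * 1 := mul_le_mul_of_nonneg_left hS1 ha1'.le
      _ = 1 - a := mul_one _
      _ < 1 := by linarith
  have hden : 0 < 1 - fC / z := by linarith
  -- relate r = ofReal(1-a) * b
  have hr : ENNReal.ofReal (1-a) * myGE pY' w = ENNReal.ofReal (fC / z) := by
    rw [hb, ← ENNReal.ofReal_mul ha1'.le, hfCz_eq]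
  -- main ENNReal computation
  have hmain : myGE (pXA pN pY' pY'') w = ENNReal.ofReal (fA / (1 - fC / z)) := by
    rw [myGE_pXA, tsum_eq_zero_add' ENNReal.summable, hN 0]
    norm_num
    have hterm : ∀ n : ℕ, pN (n+1) * (myGE pY' w ^ n * myGE pY'' w)
        = (ENNReal.ofReal a * myGE pY'' w) * (ENNReal.ofReal (fC/z)) ^ n := by
      intro n
      rw [hN (n+1)]
      simp only [le_add_iff_nonneg_left, zero_le, if_true, Nat.add_sub_cancel]
      try simp only [Nat.succ_sub_one]
      rw [ENNReal.ofReal_mul hApos.le, ENNReal.ofReal_pow ha1'.le, ← hr, mul_pow]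
      ring
    rw [tsum_congr hterm, ENNReal.tsum_mul_left, ENNReal.tsum_geometric]
    have h1r : (1 : ℝ≥0∞) - ENNReal.ofReal (fC/z) = ENNReal.ofReal (1 - fC/z) := by
      rw [ENNReal.ofReal_sub 1 (div_nonneg hfC0 hz0.le), ENNReal.ofReal_one]
    rw [h1r, hc, ← ENNReal.ofReal_mul hApos.le,
      show a * (fA / a) = fA from by field_simp,
      ENNReal.ofReal_div_of_pos hden]
    exact (div_eq_mul_inv _ _).symm
  -- LHS conversion
  have hL : (∑' k : ℕ, ((pXA pN pY' pY'') k).toReal * z ^ k)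
      = (myGE (pXA pN pY' pY'') w).toReal := by
    rw [show myGE (pXA pN pY' pY'') w = ∑' k, (pXA pN pY' pY'') k * w ^ k from rfl,
      ENNReal.tsum_toReal_eq
        (fun k => ENNReal.mul_ne_top (PMF.apply_ne_top _ _)
          (ENNReal.pow_ne_top ENNReal.ofReal_ne_top))]
    exact tsum_congr fun k => by
      rw [ENNReal.toReal_mul, ENNReal.toReal_pow, ENNReal.toReal_ofReal hz0.le]
  rw [hL, hmain, ENNReal.toReal_ofReal (div_nonneg hfA0 hden.le),
    show (1 - fC/z) = (z - fC)/z from by field_simp, div_div_eq_mul_div]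
  ring
end

section
/- If p satisfies p(0)>0, p(0)+p(1)<1 and μ(p)<1, then p^A satisfies p^A(0)>0, p^A(0)+p^A(1)<1 and μ(p^A)<1; moreover, if ρ(p)=1, or ρ(p)>1 and g'(ρ(p))<1, then the radius of convergence of the generating function g^A of p^A equals ρ(p). -/
/-!
`X_A` is a geometric sum: with `α = p(A)` and `β = 1 - α`, conditioning on `N` gives
`g^A(z) = E[z^X; X ∈ A] / (1 - Σ_{k+1 ∉ A} p(k+1) z^k)`, and, since `Y' + 1` is `X` conditioned
on `X ∉ A`, `α E[X_A] = β E[Y'] + α E[Y''] = μ - β`, which is `< α` exactly when `μ < 1`.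
Below `ρ` the denominator stays positive: for `r ≤ 1` the subtracted sum is at most `β`, and for
`r > 1` it is dominated termwise by `g'(ρ) < 1`. Above `ρ`, finiteness of `g^A(r)` forces a
finite numerator and a positive denominator, hence `g(r) = E[r^X; X ∈ A] + r Σ_{k+1 ∉ A} p(k+1) r^k`
would be finite. Finally `p^A(0) ≥ p(0)`, and some `m ≥ 2` has `p^A(m) > 0`, by looking at single
outcomes of `(N, Y', Y'')`.
-/

open scoped Classical ENNReal

namespace PMF

variable {α β : Type*}

noncomputable def expect (q : PMF α) (f : α → ℝ≥0∞) : ℝ≥0∞ := ∑' a, q a * f a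

theorem expect_pure (a : α) (f : α → ℝ≥0∞) : (pure a).expect f = f a := by
  rw [expect, tsum_eq_single a fun b hb => by simp [pure_apply, hb]]
  simp

theorem expect_bind (q : PMF α) (g : α → PMF β) (f : β → ℝ≥0∞) :
    (q.bind g).expect f = q.expect fun a => (g a).expect f := by
  simp only [expect, bind_apply, ← ENNReal.tsum_mul_right, ← ENNReal.tsum_mul_left, mul_assoc]
  exact ENNReal.tsum_comm

theorem expect_map (q : PMF α) (g : α → β) (f : β → ℝ≥0∞) :
    (q.map g).expect f = q.expect (f ∘ g) := by
  simp only [map, expect_bind, Function.comp_apply, expect_pure]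
  rfl

theorem expect_add (q : PMF α) (f g : α → ℝ≥0∞) :
    q.expect (fun a => f a + g a) = q.expect f + q.expect g := by
  simp only [expect, mul_add, ENNReal.tsum_add]

theorem expect_const (q : PMF α) (c : ℝ≥0∞) : q.expect (fun _ => c) = c := by
  rw [expect, ENNReal.tsum_mul_right, q.tsum_coe, one_mul]

theorem expect_const_mul (q : PMF α) (c : ℝ≥0∞) (f : α → ℝ≥0∞) :
    q.expect (fun a => c * f a) = c * q.expect f := by
  simp only [expect, mul_left_comm _ c, ENNReal.tsum_mul_left]

theorem expect_mul_const (q : PMF α) (c : ℝ≥0∞) (f : α → ℝ≥0∞) :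
    q.expect (fun a => f a * c) = q.expect f * c := by
  simp only [expect, ← mul_assoc, ENNReal.tsum_mul_right]

theorem mul_expect_eq_tsum {q : PMF α} {w : α → ℝ≥0∞} {c : ℝ≥0∞} (h : ∀ a, q a = w a / c)
    (hc0 : c ≠ 0) (hc : c ≠ ∞) (f : α → ℝ≥0∞) : c * q.expect f = ∑' a, w a * f a := by
  simp only [expect, h, ← ENNReal.tsum_mul_left, ← mul_assoc, ENNReal.mul_div_cancel hc0 hc]

theorem mul_le_bind_apply (q : PMF α) (g : α → PMF β) (a : α) (b : β) :
    q a * g a b ≤ q.bind g b :=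
  ENNReal.le_tsum a

theorem apply_le_map_apply (q : PMF α) (g : α → β) (a : α) : q a ≤ q.map g (g a) := by
  simpa using q.mul_le_bind_apply (pure ∘ g) a (g a)

theorem toReal_add_toReal_lt_one (q : PMF α) {a b c : α} (hab : a ≠ b) (hca : c ≠ a)
    (hcb : c ≠ b) (hc : q c ≠ 0) : (q a).toReal + (q b).toReal < 1 := by
  have hle : q a + q b + q c ≤ 1 := by
    have := ENNReal.sum_le_tsum (f := q) {a, b, c}
    rwa [Finset.sum_insert (by simp [hab, hca.symm]), Finset.sum_insert (by simp [hcb.symm]),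
      Finset.sum_singleton, q.tsum_coe, ← add_assoc] at this
  have hlt : q a + q b < 1 :=
    (ENNReal.lt_add_right (by simp [q.apply_ne_top]) hc).trans_le hle
  rw [← ENNReal.toReal_add (q.apply_ne_top a) (q.apply_ne_top b)]
  exact ENNReal.toReal_lt_of_lt_ofReal (by simpa using hlt)

theorem expect_map_add_pow (q : PMF ℕ) (x : ℝ≥0∞) (a : ℕ) :
    (q.map (a + ·)).expect (x ^ ·) = x ^ a * q.expect (x ^ ·) := by
  simp only [expect_map, Function.comp_def, pow_add, expect_const_mul]

theorem expect_map_add_cast (q : PMF ℕ) (a : ℕ) :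
    (q.map (a + ·)).expect (↑) = a + q.expect (↑) := by
  simp only [expect_map, Function.comp_def, Nat.cast_add, expect_add, expect_const]

end PMF

open PMF

theorem expect_sumIid_pow (q : PMF ℕ) (x : ℝ≥0∞) (n : ℕ) :
    (sumIid q n).expect (x ^ ·) = q.expect (x ^ ·) ^ n := by
  induction n with
  | zero => simp [sumIid, expect_pure]
  | succ n ih =>
    simp only [sumIid, expect_bind, expect_map_add_pow, ih, expect_mul_const, pow_succ']

theorem expect_sumIid_cast (q : PMF ℕ) (n : ℕ) :
    (sumIid q n).expect (↑) = n * q.expect (↑) := by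
  induction n with
  | zero => simp [sumIid, expect_pure]
  | succ n ih =>
    simp only [sumIid, expect_bind, expect_map_add_cast, ih, expect_add, expect_const]
    push_cast
    ring

theorem apply_pow_le_sumIid (q : PMF ℕ) (c n : ℕ) : q c ^ n ≤ sumIid q n (n * c) := by
  induction n with
  | zero => simp [sumIid]
  | succ n ih =>
    rw [sumIid, pow_succ', add_mul, one_mul, add_comm]
    exact (mul_le_mul_right (ih.trans (apply_le_map_apply _ _ _)) _).trans
      (mul_le_bind_apply _ _ c _)

theorem mul_le_pXA_apply (pN pY' pY'' : PMF ℕ) (n s y : ℕ) :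
    pN n * (sumIid pY' (n - 1) s * pY'' y) ≤ pXA pN pY' pY'' (s + y) :=
  (mul_le_mul_right ((mul_le_mul_right (apply_le_map_apply pY'' _ y) _).trans
    (mul_le_bind_apply _ _ s _)) _).trans (mul_le_bind_apply _ _ n _)

theorem expect_pXA_pow (pN pY' pY'' : PMF ℕ) (x : ℝ≥0∞) :
    (pXA pN pY' pY'').expect (x ^ ·)
      = pN.expect fun n => pY'.expect (x ^ ·) ^ (n - 1) * pY''.expect (x ^ ·) := by
  simp only [pXA, expect_bind, expect_map_add_pow, expect_mul_const, expect_sumIid_pow]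

theorem expect_pXA_cast (pN pY' pY'' : PMF ℕ) :
    (pXA pN pY' pY'').expect (↑)
      = pN.expect (fun n => ((n - 1 : ℕ) : ℝ≥0∞)) * pY'.expect (↑) + pY''.expect (↑) := by
  simp only [pXA, expect_bind, expect_map_add_cast, expect_add, expect_const, expect_sumIid_cast,
    expect_mul_const]

def IsShiftedGeometric (pN : PMF ℕ) (a : ℝ) : Prop :=
  ∀ n : ℕ, pN n = if 1 ≤ n then ENNReal.ofReal (a * (1 - a) ^ (n - 1)) else 0

section Geometric

variable {pN : PMF ℕ} {a : ℝ}

theorem IsShiftedGeometric.apply_zero (hN : IsShiftedGeometric pN a) : pN 0 = 0 := by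
  simp [hN 0]

theorem IsShiftedGeometric.apply_succ (hN : IsShiftedGeometric pN a) (n : ℕ) :
    pN (n + 1) = ENNReal.ofReal (a * (1 - a) ^ n) := by
  simp [hN (n + 1)]

theorem expect_eq_tsum_of_geom (hN : IsShiftedGeometric pN a) (ha0 : 0 ≤ a) (ha1 : a ≤ 1)
    (f : ℕ → ℝ≥0∞) :
    pN.expect f = ENNReal.ofReal a * ∑' n, ENNReal.ofReal (1 - a) ^ n * f (n + 1) := by
  rw [expect, tsum_eq_zero_add' ENNReal.summable, hN.apply_zero, zero_mul, zero_add,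
    ← ENNReal.tsum_mul_left]
  simp [hN.apply_succ, ENNReal.ofReal_mul ha0, ENNReal.ofReal_pow (sub_nonneg.2 ha1), mul_assoc]

theorem expect_pred_of_geom (hN : IsShiftedGeometric pN a) (ha0 : 0 < a) (ha1 : a < 1) :
    pN.expect (fun n => ((n - 1 : ℕ) : ℝ≥0∞)) = ENNReal.ofReal ((1 - a) / a) := by
  have hnorm : ‖1 - a‖ < 1 := by rw [Real.norm_of_nonneg] <;> linarith
  have hsum : Summable fun n : ℕ => (n : ℝ) * (1 - a) ^ n := by
    simpa using summable_pow_mul_geometric_of_norm_lt_one 1 hnorm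
  rw [expect_eq_tsum_of_geom hN ha0.le ha1.le]
  simp only [Nat.add_sub_cancel]
  have hterm : ∀ n : ℕ, ENNReal.ofReal (1 - a) ^ n * n = ENNReal.ofReal (n * (1 - a) ^ n) := by
    intro n
    rw [ENNReal.ofReal_mul n.cast_nonneg, ENNReal.ofReal_pow (by linarith), ENNReal.ofReal_natCast,
      mul_comm]
  rw [tsum_congr hterm, ← ENNReal.ofReal_tsum_of_nonneg (fun n => by positivity) hsum,
    ← ENNReal.ofReal_mul ha0.le, tsum_coe_mul_geometric_of_norm_lt_one hnorm]
  congr 1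
  rw [sub_sub_cancel]
  field_simp

end Geometric

section ATree

variable {A : Set ℕ} {q : ℕ → ℝ≥0∞} {a : ℝ} {pN pY' pY'' : PMF ℕ}

theorem le_pXA_apply_of_mem (hN : IsShiftedGeometric pN a) (ha0 : 0 < a)
    (hY'' : ∀ k, pY'' k = A.indicator q k / ENNReal.ofReal a) {k : ℕ} (hk : k ∈ A) :
    q k ≤ pXA pN pY' pY'' k := by
  have h := mul_le_pXA_apply pN pY' pY'' 1 0 k
  rw [zero_add, hN.apply_succ, hY'', Set.indicator_of_mem hk] at h
  simpa [sumIid, ENNReal.mul_div_cancel (ENNReal.ofReal_pos.2 ha0).ne' ENNReal.ofReal_ne_top]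
    using h

theorem exists_two_le_pXA_apply_ne_zero (hN : IsShiftedGeometric pN a) (ha0 : 0 < a) (ha1 : a < 1)
    (hY'' : ∀ k, pY'' k = A.indicator q k / ENNReal.ofReal a)
    (hY' : ∀ k, pY' k = Aᶜ.indicator q (k + 1) / ENNReal.ofReal (1 - a))
    (h0 : 0 ∈ A) (hq0 : q 0 ≠ 0) {j : ℕ} (hj : 2 ≤ j) (hqj : q j ≠ 0) :
    ∃ m, 2 ≤ m ∧ pXA pN pY' pY'' m ≠ 0 := by
  by_cases hjA : j ∈ A
  · exact ⟨j, hj, ((pos_iff_ne_zero.2 hqj).trans_le (le_pXA_apply_of_mem hN ha0 hY'' hjA)).ne'⟩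
  -- `N = 3`, both `Y'` equal to `j - 1` (that is, `X = j ∉ A` twice), then `Y'' = 0`
  refine ⟨2 * (j - 1), by omega, ne_of_gt (lt_of_lt_of_le ?_ ((mul_le_mul_right
    (mul_le_mul_left (apply_pow_le_sumIid pY' (j - 1) 2) _) _).trans
    (mul_le_pXA_apply pN pY' pY'' 3 (2 * (j - 1)) 0)))⟩
  have hj' : j - 1 + 1 = j := by omega
  simp only [hN.apply_succ, hY'', hY', hj', Set.indicator_of_mem h0,
    Set.indicator_of_mem (Set.mem_compl hjA)]
  simpa [pos_iff_ne_zero, hq0, hqj] using mul_pos ha0 (pow_pos (sub_pos.2 ha1) 2)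

theorem expect_pXA_cast_lt_one (hN : IsShiftedGeometric pN a) (ha0 : 0 < a) (ha1 : a < 1)
    (hY'' : ∀ k, pY'' k = A.indicator q k / ENNReal.ofReal a)
    (hY' : ∀ k, pY' k = Aᶜ.indicator q (k + 1) / ENNReal.ofReal (1 - a))
    (hμ : ∑' k, q k * k < 1) : (pXA pN pY' pY'').expect (↑) < 1 := by
  have hα0 : ENNReal.ofReal a ≠ 0 := (ENNReal.ofReal_pos.2 ha0).ne'
  have hβ0 : ENNReal.ofReal (1 - a) ≠ 0 := (ENNReal.ofReal_pos.2 (by linarith)).ne'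
  have hαβ : ENNReal.ofReal a + ENNReal.ofReal (1 - a) = 1 := by
    rw [← ENNReal.ofReal_add ha0.le (by linarith), add_sub_cancel, ENNReal.ofReal_one]
  have hgeo : ENNReal.ofReal a * ENNReal.ofReal ((1 - a) / a) = ENNReal.ofReal (1 - a) := by
    rw [← ENNReal.ofReal_mul ha0.le, mul_div_cancel₀ _ ha0.ne']
  have hin : ENNReal.ofReal a * pY''.expect (↑) = ∑' k, A.indicator q k * k :=
    mul_expect_eq_tsum hY'' hα0 ENNReal.ofReal_ne_top _
  have hout : ENNReal.ofReal (1 - a) * (pY'.expect (↑) + 1) = ∑' k, Aᶜ.indicator q k * k := by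
    rw [← expect_const pY' 1, ← expect_add, mul_expect_eq_tsum hY' hβ0 ENNReal.ofReal_ne_top,
      tsum_eq_zero_add' (f := fun k => Aᶜ.indicator q k * k) ENNReal.summable]
    simp
  have hsplit : ∑' k, A.indicator q k * k + ∑' k, Aᶜ.indicator q k * k = ∑' k, q k * k := by
    rw [← ENNReal.tsum_add]
    simp only [← add_mul, Set.indicator_self_add_compl_apply]
  have hlt : ENNReal.ofReal (1 - a) * pY'.expect (↑) + ∑' k, A.indicator q k * k
      + ENNReal.ofReal (1 - a) < ENNReal.ofReal a + ENNReal.ofReal (1 - a) :=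
    calc _ = ∑' k, q k * k := by rw [← hsplit, ← hout]; ring
      _ < _ := hαβ ▸ hμ
  rw [← ENNReal.mul_lt_mul_iff_right hα0 ENNReal.ofReal_ne_top, mul_one, expect_pXA_cast,
    expect_pred_of_geom hN ha0 ha1, mul_add, ← mul_assoc, hgeo, hin]
  exact (ENNReal.add_lt_add_iff_right ENNReal.ofReal_ne_top).1 hlt

/-- For `0 ∈ A` this is the paper's `g^A(z) = z E[z^X; X ∈ A] / (z - E[z^X; X ∉ A])`. -/
theorem expect_pXA_pow_eq (hN : IsShiftedGeometric pN a) (ha0 : 0 < a) (ha1 : a < 1)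
    (hY'' : ∀ k, pY'' k = A.indicator q k / ENNReal.ofReal a)
    (hY' : ∀ k, pY' k = Aᶜ.indicator q (k + 1) / ENNReal.ofReal (1 - a)) (x : ℝ≥0∞) :
    (pXA pN pY' pY'').expect (x ^ ·)
      = (∑' k, A.indicator q k * x ^ k) * (1 - ∑' k, Aᶜ.indicator q (k + 1) * x ^ k)⁻¹ := by
  have hin := mul_expect_eq_tsum hY'' (ENNReal.ofReal_pos.2 ha0).ne' ENNReal.ofReal_ne_top (x ^ ·)
  have hout := mul_expect_eq_tsum hY' (ENNReal.ofReal_pos.2 (sub_pos.2 ha1)).ne'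
    ENNReal.ofReal_ne_top (x ^ ·)
  rw [← hin, ← hout, ← ENNReal.tsum_geometric, ← ENNReal.tsum_mul_left, expect_pXA_pow,
    expect_eq_tsum_of_geom hN ha0.le ha1.le, ← ENNReal.tsum_mul_left]
  congr 1
  ext n
  rw [Nat.add_sub_cancel, mul_pow]
  ring

theorem expect_pXA_pow_ne_top (hN : IsShiftedGeometric pN a) (ha0 : 0 < a) (ha1 : a < 1)
    (hY'' : ∀ k, pY'' k = A.indicator q k / ENNReal.ofReal a)
    (hY' : ∀ k, pY' k = Aᶜ.indicator q (k + 1) / ENNReal.ofReal (1 - a)) {x : ℝ≥0∞}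
    (hg : ∑' k, q k * x ^ k ≠ ∞) (hT : ∑' k, Aᶜ.indicator q (k + 1) * x ^ k < 1) :
    (pXA pN pY' pY'').expect (x ^ ·) ≠ ∞ := by
  rw [expect_pXA_pow_eq hN ha0 ha1 hY'' hY']
  refine ENNReal.mul_ne_top (ne_top_of_le_ne_top hg (ENNReal.tsum_le_tsum fun k => ?_)) ?_
  · gcongr
    exact Set.indicator_le_self _ _ _
  · exact ENNReal.inv_ne_top.2 (tsub_pos_iff_lt.2 hT).ne'

theorem tsum_mul_pow_ne_top_of_expect_pXA_pow_ne_top (hN : IsShiftedGeometric pN a) (ha0 : 0 < a)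
    (ha1 : a < 1) (hY'' : ∀ k, pY'' k = A.indicator q k / ENNReal.ofReal a)
    (hY' : ∀ k, pY' k = Aᶜ.indicator q (k + 1) / ENNReal.ofReal (1 - a)) (h0 : 0 ∈ A)
    (hq0 : q 0 ≠ 0) {x : ℝ≥0∞} (hx : x ≠ ∞) (h : (pXA pN pY' pY'').expect (x ^ ·) ≠ ∞) :
    ∑' k, q k * x ^ k ≠ ∞ := by
  rw [expect_pXA_pow_eq hN ha0 ha1 hY'' hY'] at h
  set S := ∑' k, A.indicator q k * x ^ k
  set T := ∑' k, Aᶜ.indicator q (k + 1) * x ^ k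
  have hS0 : S ≠ 0 := by
    refine ne_of_gt (lt_of_lt_of_le ?_ (ENNReal.le_tsum (f := fun k => A.indicator q k * x ^ k) 0))
    simpa [Set.indicator_of_mem h0, pos_iff_ne_zero] using hq0
  have hS : S ≠ ∞ :=
    ne_top_of_le_ne_top h (le_mul_of_one_le_right' (ENNReal.one_le_inv.2 tsub_le_self))
  have hT : T ≠ ∞ := by
    have : (1 - T)⁻¹ ≠ ∞ := fun h' => h (by simp [h', hS0])
    exact (tsub_pos_iff_lt.1 (pos_iff_ne_zero.2 (ENNReal.inv_ne_top.1 this))).ne_top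
  have hshift : ∑' k, Aᶜ.indicator q k * x ^ k = x * T := by
    rw [tsum_eq_zero_add' ENNReal.summable, Set.indicator_of_notMem (Set.notMem_compl_iff.2 h0),
      zero_mul, zero_add, ← ENNReal.tsum_mul_left]
    simp only [pow_succ, mul_left_comm x, mul_comm _ x]
  have hsplit : ∑' k, q k * x ^ k = S + x * T := by
    rw [← hshift, ← ENNReal.tsum_add]
    simp only [← add_mul, Set.indicator_self_add_compl_apply]
  rw [hsplit]
  exact ENNReal.add_ne_top.2 ⟨hS, ENNReal.mul_ne_top hx hT⟩

theorem tsum_indicator_compl_succ_lt_one (ha0 : 0 < a) (ha1 : a < 1)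
    (hY' : ∀ k, pY' k = Aᶜ.indicator q (k + 1) / ENNReal.ofReal (1 - a)) :
    ∑' k, Aᶜ.indicator q (k + 1) < 1 := by
  have h := mul_expect_eq_tsum hY' (ENNReal.ofReal_pos.2 (sub_pos.2 ha1)).ne'
    ENNReal.ofReal_ne_top (fun _ => 1)
  simp only [expect_const, mul_one] at h
  rw [← h, ENNReal.ofReal_lt_one]
  linarith

end ATree

theorem summable_iff_tsum_ofReal_ne_top {ι : Type*} {f : ι → ℝ} (hf : ∀ i, 0 ≤ f i) :
    Summable f ↔ ∑' i, ENNReal.ofReal (f i) ≠ ∞ := by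
  refine ⟨Summable.tsum_ofReal_ne_top, fun h => ?_⟩
  simpa [ENNReal.toReal_ofReal (hf _)] using ENNReal.summable_toReal h

theorem summable_and_tsum_lt_one_iff {ι : Type*} {f : ι → ℝ} (hf : ∀ i, 0 ≤ f i) :
    (Summable f ∧ ∑' i, f i < 1) ↔ ∑' i, ENNReal.ofReal (f i) < 1 := by
  refine ⟨fun ⟨hs, h⟩ => ?_, fun h => ?_⟩
  · rwa [← ENNReal.ofReal_tsum_of_nonneg hf hs, ENNReal.ofReal_lt_one]
  · have hs := (summable_iff_tsum_ofReal_ne_top hf).2 (h.trans ENNReal.one_lt_top).ne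
    rw [← ENNReal.ofReal_tsum_of_nonneg hf hs, ENNReal.ofReal_lt_one] at h
    exact ⟨hs, h⟩

theorem summable_and_tsum_cast_mul_lt_one_iff {f : ℕ → ℝ} (hf : ∀ k, 0 ≤ f k) :
    (Summable (fun k : ℕ => (k : ℝ) * f k) ∧ ∑' k : ℕ, (k : ℝ) * f k < 1)
      ↔ ∑' k, ENNReal.ofReal (f k) * k < 1 := by
  rw [summable_and_tsum_lt_one_iff fun k => mul_nonneg k.cast_nonneg (hf k)]
  refine Iff.of_eq (congrArg (· < 1) (tsum_congr fun k => ?_))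
  rw [mul_comm, ENNReal.ofReal_mul' k.cast_nonneg, ENNReal.ofReal_natCast]

theorem summable_mul_pow_iff {p : ℕ → ℝ} (hp : ∀ k, 0 ≤ p k) {r : ℝ} (hr : 0 ≤ r) :
    Summable (fun k => p k * r ^ k) ↔ ∑' k, ENNReal.ofReal (p k) * ENNReal.ofReal r ^ k ≠ ∞ := by
  rw [summable_iff_tsum_ofReal_ne_top fun k => mul_nonneg (hp k) (pow_nonneg hr k)]
  simp only [ENNReal.ofReal_mul (hp _), ENNReal.ofReal_pow hr]

theorem PMF.summable_toReal_mul_pow_iff (q : PMF ℕ) {r : ℝ} (hr : 0 ≤ r) :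
    Summable (fun k => (q k).toReal * r ^ k) ↔ q.expect (ENNReal.ofReal r ^ ·) ≠ ∞ := by
  rw [summable_mul_pow_iff (fun _ => ENNReal.toReal_nonneg) hr]
  simp only [ENNReal.ofReal_toReal (q.apply_ne_top _), expect]

theorem PMF.summable_and_tsum_cast_mul_toReal_lt_one (q : PMF ℕ) (h : q.expect (↑) < 1) :
    Summable (fun k : ℕ => (k : ℝ) * (q k).toReal) ∧ ∑' k : ℕ, (k : ℝ) * (q k).toReal < 1 :=
  (summable_and_tsum_cast_mul_lt_one_iff fun _ => ENNReal.toReal_nonneg).2 (by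
    simpa only [ENNReal.ofReal_toReal (q.apply_ne_top _), expect] using h)

theorem exists_two_le_pos {p : ℕ → ℝ} (hp : ∀ k, 0 ≤ p k) (hpsum : ∑' k, p k = 1)
    (hp01 : p 0 + p 1 < 1) : ∃ j, 2 ≤ j ∧ 0 < p j := by
  by_contra! h
  have : ∑' k, p k = p 0 + p 1 := by
    rw [tsum_eq_sum (s := Finset.range 2) fun k hk =>
      le_antisymm (h k (by simp at hk; omega)) (hp k)]
    simp [Finset.sum_range_succ]
  linarith

theorem tsum_indicator_compl_succ_mul_pow_lt_one {p : ℕ → ℝ} {A : Set ℕ} {ρ r : ℝ}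
    (hp : ∀ k, 0 ≤ p k)
    (hmass : ∑' k, Aᶜ.indicator (fun k => ENNReal.ofReal (p k)) (k + 1) < 1)
    (hrρ : r < ρ)
    (hcase : ρ = 1 ∨ (1 < ρ ∧ Summable (fun k : ℕ => (k : ℝ) * p k * ρ ^ (k - 1))
        ∧ ∑' k : ℕ, (k : ℝ) * p k * ρ ^ (k - 1) < 1)) :
    ∑' k, Aᶜ.indicator (fun k => ENNReal.ofReal (p k)) (k + 1) * ENNReal.ofReal r ^ k < 1 := by
  rcases le_or_gt r 1 with hr1 | hr1
  · refine lt_of_le_of_lt (ENNReal.tsum_le_tsum fun k => ?_) hmass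
    exact mul_le_of_le_one_right' (pow_le_one₀ zero_le (ENNReal.ofReal_le_one.2 hr1))
  obtain ⟨-, hs, hlt⟩ := hcase.resolve_left (by linarith)
  have hρ : 0 ≤ ρ := by linarith
  have hg' := (summable_and_tsum_lt_one_iff fun k =>
    mul_nonneg (mul_nonneg k.cast_nonneg (hp k)) (pow_nonneg hρ _)).1 ⟨hs, hlt⟩
  refine lt_of_le_of_lt ?_ hg'
  rw [tsum_eq_zero_add' (f := fun k : ℕ => ENNReal.ofReal ((k : ℝ) * p k * ρ ^ (k - 1)))
    ENNReal.summable]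
  simp only [CharP.cast_eq_zero, zero_mul, ENNReal.ofReal_zero, zero_add, Nat.cast_add,
    Nat.cast_one, Nat.add_sub_cancel]
  refine ENNReal.tsum_le_tsum fun k => ?_
  calc _ ≤ ENNReal.ofReal (p (k + 1)) * ENNReal.ofReal ρ ^ k := by
        gcongr
        exact Set.indicator_le_self _ _ _
    _ = ENNReal.ofReal (p (k + 1) * ρ ^ k) := by
        rw [ENNReal.ofReal_mul (hp _), ENNReal.ofReal_pow hρ]
    _ ≤ _ := by
        rw [mul_assoc]
        exact ENNReal.ofReal_le_ofReal (le_mul_of_one_le_left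
          (mul_nonneg (hp _) (pow_nonneg hρ k)) (by linarith [k.cast_nonneg (α := ℝ)]))

theorem stmt12 (p : ℕ → ℝ) (A : Set ℕ) (ρ : ℝ)
    (hp : ∀ k, 0 ≤ p k) (hpsum : ∑' k, p k = 1)
    (hp0 : 0 < p 0) (hp01 : p 0 + p 1 < 1)
    (h0A : 0 ∈ A) (hApos : 0 < ∑' k : ℕ, A.indicator p k)
    (hAne : (∑' k : ℕ, A.indicator p k) < 1)
    (hmean : Summable (fun k : ℕ => (k : ℝ) * p k))
    (hsub : ∑' k : ℕ, (k : ℝ) * p k < 1)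
    -- `ρ = ρ(p)` is the radius of convergence of the generating function of `p`
    (hρ1 : 1 ≤ ρ)
    (hrad : (∀ r : ℝ, 0 ≤ r → r < ρ → Summable (fun k : ℕ => p k * r ^ k))
      ∧ (∀ r : ℝ, ρ < r → ¬ Summable (fun k : ℕ => p k * r ^ k)))
    -- either `ρ(p) = 1`, or `ρ(p) > 1` and `g'(ρ(p)) < 1`
    (hcase : ρ = 1 ∨ (1 < ρ ∧ Summable (fun k : ℕ => (k : ℝ) * p k * ρ ^ (k - 1))
        ∧ ∑' k : ℕ, (k : ℝ) * p k * ρ ^ (k - 1) < 1))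
    (pN pY' pY'' : PMF ℕ)
    (hN : ∀ n : ℕ, pN n = if 1 ≤ n then
        ENNReal.ofReal ((∑' k : ℕ, A.indicator p k)
          * (1 - ∑' k : ℕ, A.indicator p k) ^ (n - 1)) else 0)
    (hY'' : ∀ k : ℕ, pY'' k = if k ∈ A then
        ENNReal.ofReal (p k / ∑' j : ℕ, A.indicator p j) else 0)
    (hY' : ∀ k : ℕ, pY' k = if (k + 1) ∈ A then 0 else
        ENNReal.ofReal (p (k + 1) / (1 - ∑' j : ℕ, A.indicator p j))) :
    -- `p^A` satisfies the basic assumptions and is subcritical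
    0 < ((pXA pN pY' pY'') 0).toReal
    ∧ ((pXA pN pY' pY'') 0).toReal + ((pXA pN pY' pY'') 1).toReal < 1
    ∧ Summable (fun k : ℕ => (k : ℝ) * ((pXA pN pY' pY'') k).toReal)
    ∧ (∑' k : ℕ, (k : ℝ) * ((pXA pN pY' pY'') k).toReal) < 1
    -- the radius of convergence of `g^A` equals `ρ(p)`
    ∧ (∀ r : ℝ, 0 ≤ r → r < ρ → Summable (fun k : ℕ => ((pXA pN pY' pY'') k).toReal * r ^ k))
    ∧ (∀ r : ℝ, ρ < r → ¬ Summable (fun k : ℕ => ((pXA pN pY' pY'') k).toReal * r ^ k)) := by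
  set a := ∑' k : ℕ, A.indicator p k
  set q : ℕ → ℝ≥0∞ := fun k => ENNReal.ofReal (p k)
  have hY''q : ∀ k, pY'' k = A.indicator q k / ENNReal.ofReal a := fun k => by
    by_cases hk : k ∈ A <;> simp [hY'' k, hk, q, ENNReal.ofReal_div_of_pos hApos]
  have hY'q : ∀ k, pY' k = Aᶜ.indicator q (k + 1) / ENNReal.ofReal (1 - a) := fun k => by
    by_cases hk : k + 1 ∈ A <;> simp [hY' k, hk, q, ENNReal.ofReal_div_of_pos (sub_pos.2 hAne)]
  have hq0 : q 0 ≠ 0 := (ENNReal.ofReal_pos.2 hp0).ne'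
  have hμ : ∑' k, q k * k < 1 := (summable_and_tsum_cast_mul_lt_one_iff hp).1 ⟨hmean, hsub⟩
  obtain ⟨hmeanA, hsubA⟩ := (pXA pN pY' pY'').summable_and_tsum_cast_mul_toReal_lt_one
    (expect_pXA_cast_lt_one hN hApos hAne hY''q hY'q hμ)
  refine ⟨?_, ?_, hmeanA, hsubA, fun r hr hrρ => ?_, fun r hrρ hS => ?_⟩
  · exact ENNReal.toReal_pos ((pos_iff_ne_zero.2 hq0).trans_le
      (le_pXA_apply_of_mem hN hApos hY''q h0A)).ne' (PMF.apply_ne_top _ 0)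
  · obtain ⟨j, hj, hpj⟩ := exists_two_le_pos hp hpsum hp01
    obtain ⟨m, hm, hPm⟩ := exists_two_le_pXA_apply_ne_zero hN hApos hAne hY''q hY'q h0A hq0 hj
      (ENNReal.ofReal_pos.2 hpj).ne'
    exact PMF.toReal_add_toReal_lt_one _ zero_ne_one (by omega) (by omega) hPm
  · rw [PMF.summable_toReal_mul_pow_iff _ hr]
    exact expect_pXA_pow_ne_top hN hApos hAne hY''q hY'q
      ((summable_mul_pow_iff hp hr).1 (hrad.1 r hr hrρ))
      (tsum_indicator_compl_succ_mul_pow_lt_one hp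
        (tsum_indicator_compl_succ_lt_one hApos hAne hY'q) hrρ hcase)
  · have hr : 0 ≤ r := by linarith
    rw [PMF.summable_toReal_mul_pow_iff _ hr] at hS
    exact hrad.2 r hrρ ((summable_mul_pow_iff hp hr).2
      (tsum_mul_pow_ne_top_of_expect_pXA_pow_ne_top hN hApos hAne hY''q hY'q h0A hq0
        ENNReal.ofReal_ne_top hS))
end

section
/- Strong ratio limit corollary: let (X_n) be i.i.d. ℕ-valued with aperiodic distribution p satisfying μ(p)≤1 and either μ(p)=1 or E[e^{θX_1}]=∞ for all θ>0, and let S_n = X_1+…+X_n. Assuming the strong ratio limit property lim_n P(S_{n−m}=n−k)/P(S_n=n)=1 for all m,k∈ℤ, one has for all k∈ℤ and ℓ∈ℕ: lim_n (1/P(S_n=n)) Σ_{j≥k} p(j) P(S_n = n+ℓ−j) = Σ_{j≥k} p(j), and lim_n (1/P(S_n=n)) Σ_{j≥k} j·p(j) P(S_n = n+ℓ−j) = 1 − μ(p) + Σ_{j≥k} j·p(j). -/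
/-!
Up to finitely many terms, the sums over `j ≥ k` are full convolutions, and those have closed
forms: `∑ⱼ p(j) P(S_n = M - j) = P(S_{n+1} = M)`, and, applying the derivation `X d/dX` to
`(∑ⱼ p(j) Xʲ)^(n+1)`, `∑ⱼ j p(j) P(S_n = M - j) = M / (n+1) · P(S_{n+1} = M)`.
With `M = n + ℓ`, the strong ratio limit property makes both full sums, divided by `P(S_n = n)`,
tend to `1`, and each of the finitely many omitted terms `j < k` tends to `p(j)`, resp. `j p(j)`.
-/

open Filter

/-- `walk p n m = P(S_n = m)` for the random walk with i.i.d. steps of law `p`. -/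
noncomputable def walk (p : ℕ → ℝ) : ℕ → ℕ → ℝ
  | 0, m => if m = 0 then 1 else 0
  | n + 1, m => ∑ j ∈ Finset.range (m + 1), p j * walk p n (m - j)

/-- `walkZ p n m`, allowing an integer target (zero for negative targets). -/
noncomputable def walkZ (p : ℕ → ℝ) (n : ℕ) (m : ℤ) : ℝ :=
  if 0 ≤ m then walk p n m.toNat else 0

/-- Version allowing an integer number of steps. -/
noncomputable def walkZZ (p : ℕ → ℝ) (n m : ℤ) : ℝ :=
  if 0 ≤ n then walkZ p n.toNat m else 0

open PowerSeries

lemma PowerSeries.coeff_X_mul_derivative {R : Type*} [CommSemiring R] (f : R⟦X⟧) (m : ℕ) :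
    coeff m (X * d⁄dX R f) = m * coeff m f := by
  cases m with
  | zero => simp
  | succ m => rw [coeff_succ_X_mul, coeff_derivative]; push_cast; ring

lemma tsum_ite_le_eq_tsum_sub_sum {G : Type*} [AddCommGroup G] [TopologicalSpace G]
    [IsTopologicalAddGroup G] [T2Space G] {f : ℕ → G} (hf : Summable f) (K : ℕ) :
    ∑' j, (if K ≤ j then f j else 0) = ∑' j, f j - ∑ j ∈ Finset.range K, f j := by
  rw [← hf.sum_add_tsum_compl (s := Finset.range K), _root_.tsum_subtype, add_sub_cancel_left]
  congr 1
  ext j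
  simp [Set.indicator_apply]

section Walk

variable (p : ℕ → ℝ)

lemma walk_eq_coeff_pow (n m : ℕ) : walk p n m = coeff m (mk p ^ n) := by
  induction n generalizing m with
  | zero => simp [walk, coeff_one]
  | succ n ih =>
    rw [walk, pow_succ', coeff_mul,
      Finset.Nat.sum_antidiagonal_eq_sum_range_succ fun i j => coeff i (mk p) * coeff j (mk p ^ n)]
    simp [ih]

lemma sum_natCast_mul_mul_walk_sub (n m : ℕ) :
    ∑ j ∈ Finset.range (m + 1), j * p j * walk p n (m - j) = m / (n + 1) * walk p (n + 1) m := by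
  have hD : X * d⁄dX ℝ (mk p ^ (n + 1)) = (n + 1 : ℝ) • ((X * d⁄dX ℝ (mk p)) * mk p ^ n) := by
    rw [derivative_pow, Algebra.smul_def]
    simp only [Nat.cast_add, Nat.cast_one, add_tsub_cancel_right, algebraMap_eq, map_add,
      map_natCast, map_one]
    ring
  have h := congrArg (coeff m) hD
  rw [coeff_X_mul_derivative, coeff_smul, coeff_mul,
    Finset.Nat.sum_antidiagonal_eq_sum_range_succ
      fun i j => coeff i (X * d⁄dX ℝ (mk p)) * coeff j (mk p ^ n)] at h
  simp only [coeff_X_mul_derivative, coeff_mk, ← walk_eq_coeff_pow, smul_eq_mul] at h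
  rw [div_mul_eq_mul_div, h]
  field_simp

lemma walkZ_natCast (n m : ℕ) : walkZ p n m = walk p n m := by
  simp [walkZ]

lemma walkZZ_natCast (n : ℕ) (m : ℤ) : walkZZ p n m = walkZ p n m := by
  simp [walkZZ]

variable (f : ℕ → ℝ) (n M : ℕ)

lemma mul_walkZ_sub_eq_zero_of_lt {j : ℕ} (hj : M < j) : f j * walkZ p n ((M : ℤ) - j) = 0 := by
  rw [walkZ, if_neg (by omega), mul_zero]

lemma summable_mul_walkZ_sub : Summable fun j : ℕ => f j * walkZ p n ((M : ℤ) - j) :=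
  summable_of_ne_finset_zero (s := Finset.range (M + 1)) fun j hj =>
    mul_walkZ_sub_eq_zero_of_lt p f n M (by simpa [Nat.lt_succ_iff] using hj)

lemma tsum_mul_walkZ_sub :
    ∑' j : ℕ, f j * walkZ p n ((M : ℤ) - j) =
      ∑ j ∈ Finset.range (M + 1), f j * walk p n (M - j) := by
  rw [tsum_eq_sum (s := Finset.range (M + 1)) fun j hj =>
    mul_walkZ_sub_eq_zero_of_lt p f n M (by simpa using hj)]
  refine Finset.sum_congr rfl fun j hj => ?_
  rw [← Nat.cast_sub (by simpa [Nat.lt_succ_iff] using hj), walkZ_natCast]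

lemma tsum_mul_walkZ_sub_eq_walk_succ :
    ∑' j : ℕ, p j * walkZ p n ((M : ℤ) - j) = walk p (n + 1) M := by
  rw [tsum_mul_walkZ_sub, walk]

lemma tsum_mul_mul_walkZ_sub :
    ∑' j : ℕ, j * p j * walkZ p n ((M : ℤ) - j) = M / (n + 1) * walk p (n + 1) M := by
  rw [tsum_mul_walkZ_sub, sum_natCast_mul_mul_walk_sub]

end Walk

lemma tendsto_natCast_add_div_natCast_add (a b : ℝ) :
    Tendsto (fun n : ℕ => (n + a) / (n + b)) atTop (nhds 1) := by
  simpa [add_comm] using tendsto_add_mul_div_add_mul_atTop_nhds a b 1 one_ne_zero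

lemma tendsto_tsum_ite_le_div {ι : Type*} {l : Filter ι} {w : ℕ → ℝ} {a : ι → ℕ → ℝ}
    {b : ι → ℝ} {L : ℝ} (K : ℕ) (hsum : ∀ i, Summable fun j => w j * a i j)
    (hterm : ∀ j, Tendsto (fun i => a i j / b i) l (nhds 1))
    (hfull : Tendsto (fun i => (∑' j, w j * a i j) / b i) l (nhds L)) :
    Tendsto (fun i => (∑' j, if K ≤ j then w j * a i j else 0) / b i) l
      (nhds (L - ∑ j ∈ Finset.range K, w j)) := by
  have hfin : Tendsto (fun i => ∑ j ∈ Finset.range K, w j * (a i j / b i)) l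
      (nhds (∑ j ∈ Finset.range K, w j)) := by
    simpa using tendsto_finsetSum _ fun j _ => (hterm j).const_mul (w j)
  refine (hfull.sub hfin).congr fun i => ?_
  rw [tsum_ite_le_eq_tsum_sub_sum (hsum i), sub_div, Finset.sum_div]
  simp only [mul_div_assoc]

theorem stmt13_general (p : ℕ → ℝ)
    (hpsum : ∑' k, p k = 1)
    (hmean : Summable (fun k : ℕ => (k : ℝ) * p k))
    -- the strong ratio limit property, taken as hypothesis
    (hsrlp : ∀ m k : ℤ, Tendsto
        (fun n : ℕ => walkZZ p ((n : ℤ) - m) ((n : ℤ) - k) / walk p n n) atTop (nhds 1)) :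
    ∀ (k : ℤ) (ℓ : ℕ),
      Tendsto (fun n : ℕ =>
          (∑' j : ℕ, if k ≤ (j : ℤ) then p j * walkZ p n ((n : ℤ) + ℓ - j) else 0)
            / walk p n n)
        atTop (nhds (∑' j : ℕ, if k ≤ (j : ℤ) then p j else 0))
      ∧ Tendsto (fun n : ℕ =>
          (∑' j : ℕ, if k ≤ (j : ℤ) then (j : ℝ) * p j * walkZ p n ((n : ℤ) + ℓ - j) else 0)
            / walk p n n)
        atTop (nhds (1 - (∑' j : ℕ, (j : ℝ) * p j)
          + ∑' j : ℕ, if k ≤ (j : ℤ) then (j : ℝ) * p j else 0)) := by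
  intro k ℓ
  have hsummable : Summable p := by
    by_contra h
    simp [tsum_eq_zero_of_not_summable h] at hpsum
  have hshift (n : ℕ) : (n : ℤ) + ℓ = ((n + ℓ : ℕ) : ℤ) := by push_cast; rfl
  have hterm (j : ℕ) :
      Tendsto (fun n : ℕ => walkZ p n ((n : ℤ) + ℓ - j) / walk p n n) atTop (nhds 1) := by
    convert hsrlp 0 (j - ℓ) using 3 with n
    rw [sub_zero, walkZZ_natCast]
    ring_nf
  have hnext : Tendsto (fun n : ℕ => walk p (n + 1) (n + ℓ) / walk p n n) atTop (nhds 1) := by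
    convert hsrlp (-1) (-ℓ) using 3 with n
    rw [show (n : ℤ) - -1 = ((n + 1 : ℕ) : ℤ) by push_cast; ring, walkZZ_natCast,
      show (n : ℤ) - -ℓ = ((n + ℓ : ℕ) : ℤ) by push_cast; ring, walkZ_natCast]
  simp only [← Int.toNat_le]
  constructor
  · rw [tsum_ite_le_eq_tsum_sub_sum hsummable, hpsum]
    refine tendsto_tsum_ite_le_div _ (fun n => ?_) hterm ?_
    · simpa using summable_mul_walkZ_sub p p n (n + ℓ)
    · simpa only [hshift, tsum_mul_walkZ_sub_eq_walk_succ] using hnext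
  · convert tendsto_tsum_ite_le_div (w := fun j => j * p j) (L := 1) k.toNat (fun n => ?_)
      hterm ?_ using 2
    · rw [tsum_ite_le_eq_tsum_sub_sum hmean]
      ring
    · simpa using summable_mul_walkZ_sub p (fun j => j * p j) n (n + ℓ)
    · simp only [hshift, tsum_mul_mul_walkZ_sub]
      simpa [mul_div_assoc] using (tendsto_natCast_add_div_natCast_add ℓ 1).mul hnext

theorem stmt13 (p : ℕ → ℝ)
    (hp : ∀ k, 0 ≤ p k) (hpsum : ∑' k, p k = 1)
    (hmean : Summable (fun k : ℕ => (k : ℝ) * p k))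
    (hμle : ∑' k : ℕ, (k : ℝ) * p k ≤ 1)
    -- either `μ(p) = 1` or `E[e^{θ X}] = ∞` for all `θ > 0`
    (hcrit : (∑' k : ℕ, (k : ℝ) * p k) = 1
      ∨ ∀ θ : ℝ, 0 < θ → ¬ Summable (fun k : ℕ => Real.exp (θ * k) * p k))
    -- aperiodicity: `P(S_n = n) > 0` for all large `n`
    (hap : ∃ n₀ : ℕ, ∀ n ≥ n₀, 0 < walk p n n)
    -- the strong ratio limit property, taken as hypothesis
    (hsrlp : ∀ m k : ℤ, Tendsto
        (fun n : ℕ => walkZZ p ((n : ℤ) - m) ((n : ℤ) - k) / walk p n n) atTop (nhds 1)) :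
    ∀ (k : ℤ) (ℓ : ℕ),
      Tendsto (fun n : ℕ =>
          (∑' j : ℕ, if k ≤ (j : ℤ) then p j * walkZ p n ((n : ℤ) + ℓ - j) else 0)
            / walk p n n)
        atTop (nhds (∑' j : ℕ, if k ≤ (j : ℤ) then p j else 0))
      ∧ Tendsto (fun n : ℕ =>
          (∑' j : ℕ, if k ≤ (j : ℤ) then (j : ℝ) * p j * walkZ p n ((n : ℤ) + ℓ - j) else 0)
            / walk p n n)
        atTop (nhds (1 - (∑' j : ℕ, (j : ℝ) * p j)
          + ∑' j : ℕ, if k ≤ (j : ℤ) then (j : ℝ) * p j else 0)) :=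
  stmt13_general p hpsum hmean hsrlp
end
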